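/- arXiv:2512.14966 — 5 statements merged into one kernel-verified Lean document; each statement's English description precedes it below -/
import Mathlib

section
/- Fix d ∈ ℕ with d ≥ 1 and ε > 0. Let Q = {a^(2j−1) : j ≥ 1} ⊆ ℕ, where a = ⌈32/ε + 2⌉. Then for all m_1 < m_2 < … < m_d < k with m_1,…,m_d,k ∈ Q and every step preserving map F : S⁺_{ℓ∞^k} → S⁺_{ℓ1^k} with ω_F(1/d) ≤ ε/8, one has ‖F(z(m̄)) − (1/k)·∑_{i=1}^k e_i‖_1 ≤ ε, where (e_i)_{i=1}^k is the standard basis of ℓ1^k. -/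
/-- The sup norm (`ℓ∞` norm) on `ℝ^k`. -/
noncomputable def supNorm {k : ℕ} (x : Fin k → ℝ) : ℝ := ⨆ i, |x i|

/-- The `ℓ1` norm on `ℝ^k`. -/
noncomputable def l1Norm {k : ℕ} (x : Fin k → ℝ) : ℝ := ∑ i, |x i|

/-- The vector `z(m̄) = ∑_{s=1}^d (1 - (s-1)/d)·1_{(m_{s-1}, m_s]}` in `ℝ^k`, where
coordinate `i : Fin k` corresponds to the index `i+1 ∈ {1,…,k}`. -/
noncomputable def zVec (d k : ℕ) (m : ℕ → ℕ) : Fin k → ℝ :=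
  fun i => ∑ s ∈ Finset.Icc 1 d, (1 - ((s : ℝ) - 1) / (d : ℝ)) *
    (if m (s - 1) ≤ (i : ℕ) ∧ (i : ℕ) < m s then 1 else 0)

/-- The positive part of the unit sphere of `ℓ∞^k`. -/
def SplusInf (k : ℕ) : Set (Fin k → ℝ) := {x | supNorm x = 1 ∧ ∀ i, 0 ≤ x i}

/-- The positive part of the unit sphere of `ℓ1^k`. -/
def SplusL1 (k : ℕ) : Set (Fin k → ℝ) := {x | l1Norm x = 1 ∧ ∀ i, 0 ≤ x i}

/-!
On the blocks `[m_t, m_{t+1})` (`t ≤ d`, with `m_{d+1} = k`) the vector `z` is constant, equal to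
`1 - t/d`, so by step preservation `F z` is constant on each block, say `c_t`; let `N_t` be the size
of block `t`. Merging the blocks in pairs `{0,1}, {2,3}, …` or `{1,2}, {3,4}, …` moves `z` by at
most `1/d` in `ℓ∞`, and the images of the two merged vectors are constant on the merged pairs.
Comparing `F z` with them bounds the variation `∑_{t<d} N_t |c_t - c_{t+1}|` by `ε/4`.
Because `Q` is a lacunary sequence, `(a² - 1) N_t ≤ N_{t+1}`, hence
`N_t c_t ≤ N_{t+1} c_{t+1} / (a² - 1) + N_t |c_t - c_{t+1}|`, and all blocks but the last carry
mass at most `1/(a² - 1) + ε/4`. The last block contains all but a fraction `m_d/k ≤ 1/a²` of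
the coordinates, so `F z` is within `2 (1/(a² - 1) + ε/4 + 1/a²) ≤ ε` of the uniform vector.
-/

open Finset

namespace StepConcentration

theorem mul_abs_sub_le_of_eq {N N' x y x' y' : ℝ} (hN : 0 ≤ N) (hNN' : N ≤ N') (h : x' = y') :
    N * |x - y| ≤ N * |x - x'| + N' * |y - y'| := by
  have htri : |x - y| ≤ |x - x'| + |y - y'| := by
    subst h
    simpa [abs_sub_comm y] using abs_sub_le x x' y
  calc N * |x - y| ≤ N * (|x - x'| + |y - y'|) := mul_le_mul_of_nonneg_left htri hN
    _ ≤ N * |x - x'| + N' * |y - y'| := by nlinarith [abs_nonneg (y - y')]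

theorem sum_range_add_succ_le {n : ℕ} {f g : ℕ → ℝ} (hf : 0 ≤ f n) (hg : 0 ≤ g 0) :
    ∑ s ∈ range n, (f s + g (s + 1)) ≤ ∑ s ∈ range (n + 1), (f s + g s) := by
  rw [sum_add_distrib, sum_add_distrib, sum_range_succ f, sum_range_succ' g]
  linarith

theorem sum_mul_abs_sub_succ_le {n : ℕ} {N c c₁ c₂ : ℕ → ℝ} (hN : ∀ s ≤ n, 0 ≤ N s)
    (hN_mono : ∀ s < n, N s ≤ N (s + 1)) (hc₁ : ∀ s < n, Even s → c₁ s = c₁ (s + 1))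
    (hc₂ : ∀ s < n, Odd s → c₂ s = c₂ (s + 1)) :
    ∑ s ∈ range n, N s * |c s - c (s + 1)| ≤
      ∑ s ∈ range (n + 1), N s * |c s - c₁ s| + ∑ s ∈ range (n + 1), N s * |c s - c₂ s| := by
  let e₁ s := N s * |c s - c₁ s|
  let e₂ s := N s * |c s - c₂ s|
  let f s := if Even s then e₁ s else e₂ s
  let g s := if Even s then e₂ s else e₁ s
  have hf : 0 ≤ f n := by
    simp only [f, e₁, e₂]
    split_ifs <;> exact mul_nonneg (hN n le_rfl) (abs_nonneg _)
  have hg : 0 ≤ g 0 := by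
    simp only [g, e₁, e₂]
    split_ifs <;> exact mul_nonneg (hN 0 (Nat.zero_le n)) (abs_nonneg _)
  -- Charging the link `(s, s + 1)` to whichever of `c₁`, `c₂` is constant on it, every index
  -- is charged at most once to each of `c₁` and `c₂`.
  calc ∑ s ∈ range n, N s * |c s - c (s + 1)| ≤ ∑ s ∈ range n, (f s + g (s + 1)) := by
        refine sum_le_sum fun s hs => ?_
        have hs := mem_range.1 hs
        rcases Nat.even_or_odd s with h | h
        · simp only [f, g, e₁, h, Nat.even_add_one, not_true, if_true, if_false]
          exact mul_abs_sub_le_of_eq (hN s hs.le) (hN_mono s hs) (hc₁ s hs h)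
        · simp only [f, g, e₂, Nat.not_even_iff_odd.2 h, Nat.even_add_one, not_false_eq_true,
            if_true, if_false]
          exact mul_abs_sub_le_of_eq (hN s hs.le) (hN_mono s hs) (hc₂ s hs h)
    _ ≤ ∑ s ∈ range (n + 1), (f s + g s) := sum_range_add_succ_le hf hg
    _ = _ := by
        rw [← sum_add_distrib]
        refine sum_congr rfl fun s _ => ?_
        simp only [f, g]
        split_ifs <;> ring

theorem sum_mul_le_of_growth {n : ℕ} {N c : ℕ → ℝ} {q : ℝ} (hq : 0 < q)
    (hN : ∀ s ≤ n, 0 ≤ N s) (hc : ∀ s ≤ n, 0 ≤ c s) (hgrowth : ∀ s < n, q * N s ≤ N (s + 1)) :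
    ∑ s ∈ range n, N s * c s ≤
      (∑ s ∈ range (n + 1), N s * c s) / q + ∑ s ∈ range n, N s * |c s - c (s + 1)| := by
  have hshift : ∑ s ∈ range n, N (s + 1) * c (s + 1) ≤ ∑ s ∈ range (n + 1), N s * c s := by
    rw [sum_range_succ']
    linarith [mul_nonneg (hN 0 (Nat.zero_le n)) (hc 0 (Nat.zero_le n))]
  calc ∑ s ∈ range n, N s * c s
      ≤ ∑ s ∈ range n, (N (s + 1) * c (s + 1) / q + N s * |c s - c (s + 1)|) := by
        refine sum_le_sum fun s hs => ?_
        have hs := mem_range.1 hs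
        have h₁ : N s * c (s + 1) ≤ N (s + 1) * c (s + 1) / q := by
          rw [le_div_iff₀ hq]
          nlinarith [hgrowth s hs, hc (s + 1) hs]
        have h₂ : N s * (c s - c (s + 1)) ≤ N s * |c s - c (s + 1)| :=
          mul_le_mul_of_nonneg_left (le_abs_self _) (hN s hs.le)
        linarith
    _ = (∑ s ∈ range n, N (s + 1) * c (s + 1)) / q + ∑ s ∈ range n, N s * |c s - c (s + 1)| := by
        rw [sum_add_distrib, sum_div]
    _ ≤ _ := by gcongr

theorem sum_mul_abs_sub_inv_le {n : ℕ} {N c : ℕ → ℝ} {K : ℝ} (hK : 0 < K)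
    (hN : ∀ s ≤ n, 0 ≤ N s) (hc : ∀ s ≤ n, 0 ≤ c s) (hNK : ∑ s ∈ range (n + 1), N s = K)
    (hmass : ∑ s ∈ range (n + 1), N s * c s = 1) :
    ∑ s ∈ range (n + 1), N s * |c s - 1 / K| ≤
      2 * (∑ s ∈ range n, N s * c s + (∑ s ∈ range n, N s) / K) := by
  set A := ∑ s ∈ range n, N s * c s
  set P := ∑ s ∈ range n, N s
  rw [sum_range_succ] at hNK hmass ⊢
  have hhead : ∑ s ∈ range n, N s * |c s - 1 / K| ≤ A + P / K := by
    rw [sum_div, ← sum_add_distrib]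
    refine sum_le_sum fun s hs => ?_
    have hs := (mem_range.1 hs).le
    have := abs_sub (c s) (1 / K)
    rw [abs_of_nonneg (hc s hs), abs_of_pos (one_div_pos.2 hK)] at this
    calc N s * |c s - 1 / K| ≤ N s * (c s + 1 / K) := mul_le_mul_of_nonneg_left this (hN s hs)
      _ = N s * c s + N s / K := by ring
  have htail : N n * |c n - 1 / K| ≤ A + P / K := by
    have hA : 0 ≤ A := sum_nonneg fun s hs =>
      mul_nonneg (hN s (mem_range.1 hs).le) (hc s (mem_range.1 hs).le)
    have hP : 0 ≤ P / K := div_nonneg (sum_nonneg fun s hs => hN s (mem_range.1 hs).le) hK.le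
    have hNn : N n * (1 / K) = 1 - P / K := by
      field_simp
      linarith
    rw [← abs_of_nonneg (hN n le_rfl), ← abs_mul, mul_sub, hNn,
      show N n * c n = 1 - A by linarith, show 1 - A - (1 - P / K) = P / K - A by ring]
    calc |P / K - A| ≤ |P / K| + |A| := abs_sub _ _
      _ = A + P / K := by rw [abs_of_nonneg hA, abs_of_nonneg hP, add_comm]
  linarith

theorem sum_mul_abs_sub_inv_le_of_growth {n : ℕ} {N c c₁ c₂ : ℕ → ℝ} {q δ K : ℝ} (hq : 1 ≤ q)
    (hK : 0 < K) (hN : ∀ s ≤ n, 0 ≤ N s) (hgrowth : ∀ s < n, q * N s ≤ N (s + 1))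
    (hNK : ∑ s ∈ range (n + 1), N s = K) (hc : ∀ s ≤ n, 0 ≤ c s)
    (hmass : ∑ s ∈ range (n + 1), N s * c s = 1)
    (hc₁ : ∀ s < n, Even s → c₁ s = c₁ (s + 1)) (hc₂ : ∀ s < n, Odd s → c₂ s = c₂ (s + 1))
    (hδ₁ : ∑ s ∈ range (n + 1), N s * |c s - c₁ s| ≤ δ)
    (hδ₂ : ∑ s ∈ range (n + 1), N s * |c s - c₂ s| ≤ δ) :
    ∑ s ∈ range (n + 1), N s * |c s - 1 / K| ≤
      2 * (1 / q + 2 * δ + (∑ s ∈ range n, N s) / K) := by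
  have hN_mono : ∀ s < n, N s ≤ N (s + 1) := fun s hs =>
    (le_mul_of_one_le_left (hN s hs.le) hq).trans (hgrowth s hs)
  have hlinks := sum_mul_abs_sub_succ_le (c := c) hN hN_mono hc₁ hc₂
  have hsmall := sum_mul_le_of_growth (one_pos.trans_le hq) hN hc hgrowth
  have hfinal := sum_mul_abs_sub_inv_le hK hN hc hNK hmass
  rw [hmass] at hsmall
  linarith

section Blocks

variable {d k : ℕ} {m : ℕ → ℕ}

/-- Block `t ≤ d` of the coordinates `{0, …, k - 1}` is `[blockEnd t, blockEnd (t + 1))`, i.e.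
`[m t, m (t + 1))` and finally `[m d, k)`: the paper's `(m_t, m_{t+1}]` in 0-based coordinates.
On block `t` the vector `zVec d k m` takes the value `zLevel d t`. -/
def blockEnd (d k : ℕ) (m : ℕ → ℕ) (t : ℕ) : ℕ := if t ≤ d then m t else k

def blockIndex (d : ℕ) (m : ℕ → ℕ) (i : ℕ) : ℕ := Nat.findGreatest (fun t => m t ≤ i) d

noncomputable def blockSize (d k : ℕ) (m : ℕ → ℕ) (t : ℕ) : ℝ :=
  (blockEnd d k m (t + 1) : ℝ) - blockEnd d k m t

noncomputable def blockVec (d k : ℕ) (m : ℕ → ℕ) (g : ℕ → ℝ) : Fin k → ℝ :=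
  fun i => g (blockIndex d m i)

theorem blockEnd_of_le {t : ℕ} (ht : t ≤ d) : blockEnd d k m t = m t := if_pos ht

theorem blockEnd_zero (hm0 : m 0 = 0) : blockEnd d k m 0 = 0 :=
  (blockEnd_of_le (Nat.zero_le d)).trans hm0

theorem blockEnd_succ_self : blockEnd d k m (d + 1) = k := by
  simp [blockEnd]

theorem blockEnd_lt_succ (hmono : ∀ s < d, m s < m (s + 1)) (hkm : m d < k) {t : ℕ}
    (ht : t ≤ d) : blockEnd d k m t < blockEnd d k m (t + 1) := by
  rcases ht.lt_or_eq with ht | rfl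
  · simpa [blockEnd, ht.le, Nat.succ_le_of_lt ht] using hmono t ht
  · simpa [blockEnd] using hkm

theorem monotone_blockEnd (hmono : ∀ s < d, m s < m (s + 1)) (hkm : m d < k) :
    Monotone (blockEnd d k m) := by
  refine monotone_nat_of_le_succ fun t => ?_
  by_cases ht : t ≤ d
  · exact (blockEnd_lt_succ hmono hkm ht).le
  · simp [blockEnd, ht, show ¬t + 1 ≤ d by omega]

theorem blockIndex_eq_iff (hm0 : m 0 = 0) (hb : Monotone (blockEnd d k m)) {i t : ℕ}
    (hi : i < k) :
    blockIndex d m i = t ↔ blockEnd d k m t ≤ i ∧ i < blockEnd d k m (t + 1) := by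
  rw [blockIndex, Nat.findGreatest_eq_iff]
  constructor
  · rintro ⟨htd, hle, hgt⟩
    refine ⟨?_, ?_⟩
    · rcases Nat.eq_zero_or_pos t with rfl | ht
      · simp [blockEnd_zero hm0]
      · simpa [blockEnd, htd] using hle ht.ne'
    · by_cases ht : t + 1 ≤ d
      · simpa [blockEnd, ht] using hgt (Nat.lt_succ_self t) ht
      · simpa [blockEnd, ht] using hi
  · rintro ⟨hle, hlt⟩
    have htd : t ≤ d := by
      by_contra ht
      simp only [blockEnd, ht, if_false] at hle
      omega
    refine ⟨htd, fun _ => by simpa [blockEnd, htd] using hle, fun n htn hnd hn => ?_⟩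
    have := hb (show t + 1 ≤ n by omega)
    rw [blockEnd_of_le hnd] at this
    omega

theorem blockEnd_le (hb : Monotone (blockEnd d k m)) {t : ℕ} (ht : t ≤ d + 1) :
    blockEnd d k m t ≤ k :=
  (hb ht).trans_eq blockEnd_succ_self

theorem blockEnd_mem {Q : Set ℕ} (hmQ : ∀ s, 1 ≤ s → s ≤ d → m s ∈ Q) (hkQ : k ∈ Q) {t : ℕ}
    (ht : 1 ≤ t) : blockEnd d k m t ∈ Q := by
  unfold blockEnd
  split_ifs with h
  · exact hmQ t ht h
  · exact hkQ

theorem exists_blockIndex_eq (hm0 : m 0 = 0) (hmono : ∀ s < d, m s < m (s + 1)) (hkm : m d < k)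
    {t : ℕ} (ht : t ≤ d) : ∃ i : Fin k, blockIndex d m i = t := by
  have hb := monotone_blockEnd hmono hkm
  have hlt := blockEnd_lt_succ hmono hkm ht
  have hk := hlt.trans_le (blockEnd_le hb (Nat.succ_le_succ ht))
  exact ⟨⟨_, hk⟩, (blockIndex_eq_iff hm0 hb hk).2 ⟨le_rfl, hlt⟩⟩

theorem sum_range_eq_sum_sum_Ico {M : Type*} [AddCommMonoid M] {b : ℕ → ℕ} (hb : Monotone b)
    (hb0 : b 0 = 0) (f : ℕ → M) (n : ℕ) :
    ∑ i ∈ range (b n), f i = ∑ t ∈ range n, ∑ i ∈ Ico (b t) (b (t + 1)), f i := by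
  induction n with
  | zero => simp [hb0]
  | succ n ih => rw [sum_range_succ, ← ih, sum_range_add_sum_Ico _ (hb n.le_succ)]

theorem sum_blockVec (hm0 : m 0 = 0) (hb : Monotone (blockEnd d k m)) (g : ℕ → ℝ) :
    ∑ i, blockVec d k m g i =
      ∑ t ∈ range (d + 1), blockSize d k m t * g t := by
  change ∑ i : Fin k, g (blockIndex d m i) = _
  rw [Fin.sum_univ_eq_sum_range (fun i => g (blockIndex d m i))]
  nth_rewrite 1 [← blockEnd_succ_self (d := d) (k := k) (m := m)]
  rw [sum_range_eq_sum_sum_Ico hb (blockEnd_zero hm0)]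
  refine sum_congr rfl fun t ht => ?_
  have hk := blockEnd_le hb (Nat.succ_le_succ (mem_range_succ_iff.1 ht))
  rw [sum_congr rfl fun i hi => congrArg g ((blockIndex_eq_iff hm0 hb
    ((mem_Ico.1 hi).2.trans_le hk)).2 (mem_Ico.1 hi)), sum_const, Nat.card_Ico, nsmul_eq_mul,
    Nat.cast_sub (hb t.le_succ)]
  rfl

theorem blockIndex_le (i : ℕ) : blockIndex d m i ≤ d := Nat.findGreatest_le d

theorem l1Norm_blockVec (hm0 : m 0 = 0) (hb : Monotone (blockEnd d k m)) (g : ℕ → ℝ) :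
    l1Norm (blockVec d k m g) =
      ∑ t ∈ range (d + 1), blockSize d k m t * |g t| :=
  sum_blockVec hm0 hb fun t => |g t|

theorem supNorm_blockVec_sub_le {g g' : ℕ → ℝ} {δ : ℝ} (hδ : 0 ≤ δ)
    (h : ∀ t ≤ d, |g t - g' t| ≤ δ) : supNorm (blockVec d k m g - blockVec d k m g') ≤ δ :=
  Real.iSup_le (fun i => h _ (blockIndex_le i)) hδ

theorem supNorm_eq_one {x : Fin k → ℝ} (hx : ∀ i, 0 ≤ x i ∧ x i ≤ 1) {i₀ : Fin k}
    (hi₀ : x i₀ = 1) : supNorm x = 1 := by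
  refine le_antisymm (Real.iSup_le (fun i => ?_) zero_le_one) ?_
  · rw [abs_of_nonneg (hx i).1]
    exact (hx i).2
  · have := le_ciSup (Finite.bddAbove_range fun i => |x i|) i₀
    rwa [hi₀, abs_one] at this

theorem blockVec_mem_SplusInf (hm0 : m 0 = 0) (hmono : ∀ s < d, m s < m (s + 1))
    (hkm : m d < k) {g : ℕ → ℝ} (hg0 : g 0 = 1) (hg : ∀ t ≤ d, 0 ≤ g t ∧ g t ≤ 1) :
    blockVec d k m g ∈ SplusInf k := by
  have hx : ∀ i, 0 ≤ blockVec d k m g i ∧ blockVec d k m g i ≤ 1 :=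
    fun i => hg _ (blockIndex_le i)
  obtain ⟨i₀, hi₀⟩ := exists_blockIndex_eq hm0 hmono hkm (Nat.zero_le d)
  exact ⟨supNorm_eq_one hx (show g _ = 1 by rw [hi₀, hg0]), fun i => (hx i).1⟩

theorem exists_blockVec_eq_of_step (hm0 : m 0 = 0) (hmono : ∀ s < d, m s < m (s + 1))
    (hkm : m d < k) {g : ℕ → ℝ} {y : Fin k → ℝ}
    (hy : ∀ i j, blockVec d k m g i = blockVec d k m g j → y i = y j) :
    ∃ c, y = blockVec d k m c ∧ ∀ s ≤ d, ∀ t ≤ d, g s = g t → c s = c t := by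
  have hfac : Function.FactorsThrough y fun i : Fin k => blockIndex d m i :=
    fun i j hij => hy i j (congrArg g hij)
  have hc := hfac.extend_apply 0
  refine ⟨Function.extend _ y 0, funext fun i => (hc i).symm, fun s hs t ht hst => ?_⟩
  obtain ⟨i, rfl⟩ := exists_blockIndex_eq hm0 hmono hkm hs
  obtain ⟨j, rfl⟩ := exists_blockIndex_eq hm0 hmono hkm ht
  rw [hc, hc]
  exact hy i j hst

noncomputable def zLevel (d t : ℕ) : ℝ := 1 - t / d

theorem zVec_eq_blockVec (hd : 1 ≤ d) (hm0 : m 0 = 0) (hb : Monotone (blockEnd d k m)) :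
    zVec d k m = blockVec d k m (zLevel d) := by
  funext i
  obtain ⟨t, ht⟩ : ∃ t, blockIndex d m i = t := ⟨_, rfl⟩
  have hind : ∀ s ∈ Icc 1 d, (m (s - 1) ≤ (i : ℕ) ∧ (i : ℕ) < m s) ↔ s = t + 1 := by
    intro s hs
    obtain ⟨hs1, hsd⟩ := mem_Icc.1 hs
    have := blockIndex_eq_iff hm0 hb i.2 (t := s - 1)
    simp only [blockEnd, show s - 1 ≤ d by omega, show s - 1 + 1 = s by omega, hsd,
      if_true] at this
    rw [← this]
    omega
  rw [zVec, sum_congr rfl fun s hs => by rw [if_congr (hind s hs) rfl rfl, mul_ite, mul_one,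
    mul_zero], sum_ite_eq']
  change _ = zLevel d (blockIndex d m i)
  rw [ht, zLevel]
  rcases (ht ▸ blockIndex_le (d := d) (m := m) i).lt_or_eq with htd | rfl
  · rw [if_pos (mem_Icc.2 ⟨by omega, htd⟩)]
    push_cast
    ring
  · rw [if_neg (by simp), div_self (by positivity)]
    ring

theorem blockSize_nonneg (hb : Monotone (blockEnd d k m)) (t : ℕ) : 0 ≤ blockSize d k m t :=
  sub_nonneg.2 (Nat.cast_le.2 (hb t.le_succ))

theorem sum_range_blockSize (hm0 : m 0 = 0) (n : ℕ) :
    ∑ t ∈ range n, blockSize d k m t = blockEnd d k m n := by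
  simp [blockSize, sum_range_sub (fun t => (blockEnd d k m t : ℝ)), blockEnd_zero hm0]

theorem blockSize_growth {r t : ℕ} (hr : 1 ≤ r)
    (h : r * blockEnd d k m (t + 1) ≤ blockEnd d k m (t + 2)) :
    ((r : ℝ) - 1) * blockSize d k m t ≤ blockSize d k m (t + 1) := by
  have h' : (r : ℝ) * blockEnd d k m (t + 1) ≤ blockEnd d k m (t + 2) := by exact_mod_cast h
  have hr' : (1 : ℝ) ≤ r := by exact_mod_cast hr
  have ht : (0 : ℝ) ≤ blockEnd d k m t := Nat.cast_nonneg _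
  simp only [blockSize]
  nlinarith

theorem blockVec_zLevel_comp_mem_SplusInf (hd : 1 ≤ d) (hm0 : m 0 = 0)
    (hmono : ∀ s < d, m s < m (s + 1)) (hkm : m d < k) {ρ : ℕ → ℕ} (hρ0 : ρ 0 = 0)
    (hρ : ∀ t, ρ t ≤ t) : blockVec d k m (zLevel d ∘ ρ) ∈ SplusInf k := by
  refine blockVec_mem_SplusInf hm0 hmono hkm (by simp [zLevel, hρ0]) fun t ht => ?_
  have hd' : (0 : ℝ) < d := by exact_mod_cast hd
  have hρd : (ρ t : ℝ) ≤ d := by exact_mod_cast (hρ t).trans ht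
  simp only [Function.comp_apply, zLevel]
  constructor
  · rw [sub_nonneg, div_le_one hd']
    exact hρd
  · linarith [div_nonneg (Nat.cast_nonneg (ρ t)) hd'.le]

theorem zVec_mem_SplusInf (hd : 1 ≤ d) (hm0 : m 0 = 0) (hmono : ∀ s < d, m s < m (s + 1))
    (hkm : m d < k) : zVec d k m ∈ SplusInf k :=
  zVec_eq_blockVec hd hm0 (monotone_blockEnd hmono hkm) ▸
    blockVec_zLevel_comp_mem_SplusInf hd hm0 hmono hkm (ρ := id) rfl fun _ => le_rfl

theorem supNorm_blockVec_zLevel_sub_le {ρ : ℕ → ℕ} (hρ : ∀ t, ρ t ≤ t ∧ t ≤ ρ t + 1) :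
    supNorm (blockVec d k m (zLevel d) - blockVec d k m (zLevel d ∘ ρ)) ≤ 1 / d := by
  refine supNorm_blockVec_sub_le (by positivity) fun t _ => ?_
  have h₁ : (ρ t : ℝ) ≤ t := by exact_mod_cast (hρ t).1
  have h₂ : (t : ℝ) ≤ ρ t + 1 := by exact_mod_cast (hρ t).2
  rw [Function.comp_apply, zLevel, zLevel, show 1 - (t : ℝ) / d - (1 - ρ t / d) = -((t - ρ t) / d)
    by ring, abs_neg, abs_of_nonneg (div_nonneg (sub_nonneg.2 h₁) (Nat.cast_nonneg d))]
  gcongr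
  linarith

section StepMap

variable {F : (Fin k → ℝ) → (Fin k → ℝ)} {δ : ℝ}

theorem exists_map_zVec_eq_blockVec (hd : 1 ≤ d) (hm0 : m 0 = 0)
    (hmono : ∀ s < d, m s < m (s + 1)) (hkm : m d < k)
    (hFmaps : ∀ x ∈ SplusInf k, F x ∈ SplusL1 k)
    (hstep : ∀ x ∈ SplusInf k, ∀ i j, x i = x j → F x i = F x j) :
    ∃ c, F (zVec d k m) = blockVec d k m c ∧ (∀ t ≤ d, 0 ≤ c t) ∧
      ∑ t ∈ range (d + 1), blockSize d k m t * c t = 1 := by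
  have hb := monotone_blockEnd hmono hkm
  have hzmem := zVec_mem_SplusInf hd hm0 hmono hkm
  obtain ⟨c, hFz, -⟩ := exists_blockVec_eq_of_step hm0 hmono hkm
    fun i j hij => hstep _ hzmem i j (by rwa [zVec_eq_blockVec hd hm0 hb])
  have hc : ∀ t ≤ d, 0 ≤ c t := fun t ht => by
    obtain ⟨i, rfl⟩ := exists_blockIndex_eq hm0 hmono hkm ht
    have := (hFmaps _ hzmem).2 i
    rwa [hFz] at this
  refine ⟨c, hFz, hc, ?_⟩
  rw [← (hFmaps _ hzmem).1, hFz, l1Norm_blockVec hm0 hb]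
  exact sum_congr rfl fun t ht => by rw [abs_of_nonneg (hc t (mem_range_succ_iff.1 ht))]

theorem exists_near_blockVec_of_merge (hd : 1 ≤ d) (hm0 : m 0 = 0)
    (hmono : ∀ s < d, m s < m (s + 1)) (hkm : m d < k)
    (hstep : ∀ x ∈ SplusInf k, ∀ i j, x i = x j → F x i = F x j)
    (homega : ∀ x ∈ SplusInf k, ∀ y ∈ SplusInf k,
      supNorm (x - y) ≤ 1 / (d : ℝ) → l1Norm (F x - F y) ≤ δ)
    {c : ℕ → ℝ} (hFz : F (zVec d k m) = blockVec d k m c) {ρ : ℕ → ℕ} (hρ0 : ρ 0 = 0)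
    (hρ : ∀ t, ρ t ≤ t ∧ t ≤ ρ t + 1) :
    ∃ c' : ℕ → ℝ, (∀ s ≤ d, ∀ t ≤ d, ρ s = ρ t → c' s = c' t) ∧
      ∑ t ∈ range (d + 1), blockSize d k m t * |c t - c' t| ≤ δ := by
  have hb := monotone_blockEnd hmono hkm
  have hw := blockVec_zLevel_comp_mem_SplusInf hd hm0 hmono hkm hρ0 fun t => (hρ t).1
  obtain ⟨c', hFw, hc'⟩ := exists_blockVec_eq_of_step hm0 hmono hkm (hstep _ hw)
  refine ⟨c', fun s hs t ht hst => hc' s hs t ht (by simp [hst]), ?_⟩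
  have := homega _ (zVec_mem_SplusInf hd hm0 hmono hkm) _ hw
    (zVec_eq_blockVec hd hm0 hb ▸ supNorm_blockVec_zLevel_sub_le hρ)
  rw [hFz, hFw] at this
  exact (l1Norm_blockVec hm0 hb (c - c')).symm.trans_le this

theorem l1Norm_map_zVec_sub_le (hd : 1 ≤ d) (hm0 : m 0 = 0) (hmono : ∀ s < d, m s < m (s + 1))
    (hkm : m d < k) {r : ℕ} (hr : 2 ≤ r)
    (hgrowth : ∀ t, 1 ≤ t → t ≤ d → r * blockEnd d k m t ≤ blockEnd d k m (t + 1))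
    (hFmaps : ∀ x ∈ SplusInf k, F x ∈ SplusL1 k)
    (hstep : ∀ x ∈ SplusInf k, ∀ i j, x i = x j → F x i = F x j)
    (homega : ∀ x ∈ SplusInf k, ∀ y ∈ SplusInf k,
      supNorm (x - y) ≤ 1 / (d : ℝ) → l1Norm (F x - F y) ≤ δ) :
    l1Norm (F (zVec d k m) - fun _ => 1 / (k : ℝ)) ≤
      2 * (1 / ((r : ℝ) - 1) + 2 * δ + 1 / r) := by
  have hb := monotone_blockEnd hmono hkm
  obtain ⟨c, hFz, hc, hmass⟩ := exists_map_zVec_eq_blockVec hd hm0 hmono hkm hFmaps hstep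
  -- `c₁` merges the blocks in pairs `{0, 1}, {2, 3}, …` and `c₂` in pairs `{1, 2}, {3, 4}, …`
  obtain ⟨c₁, hc₁, hδ₁⟩ := exists_near_blockVec_of_merge hd hm0 hmono hkm hstep homega hFz
    (ρ := fun t => t - t % 2) rfl fun t => by omega
  obtain ⟨c₂, hc₂, hδ₂⟩ := exists_near_blockVec_of_merge hd hm0 hmono hkm hstep homega hFz
    (ρ := fun t => t - (t + 1) % 2) rfl fun t => by omega
  have hk : (0 : ℝ) < k := by exact_mod_cast (Nat.zero_le _).trans_lt hkm
  have hmdk : (m d : ℝ) / k ≤ 1 / r := by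
    have := hgrowth d hd le_rfl
    rw [blockEnd_succ_self, blockEnd_of_le le_rfl] at this
    have hcast : (r : ℝ) * m d ≤ k := by exact_mod_cast this
    rw [div_le_div_iff₀ hk (by positivity)]
    linarith
  have hr' : (2 : ℝ) ≤ r := by exact_mod_cast hr
  calc l1Norm (F (zVec d k m) - fun _ => 1 / (k : ℝ))
      = ∑ t ∈ range (d + 1), blockSize d k m t * |c t - 1 / k| := by
        rw [hFz]
        exact l1Norm_blockVec hm0 hb fun t => c t - 1 / k
    _ ≤ 2 * (1 / ((r : ℝ) - 1) + 2 * δ + (∑ t ∈ range d, blockSize d k m t) / k) :=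
        sum_mul_abs_sub_inv_le_of_growth (by linarith) hk (fun t _ => blockSize_nonneg hb t)
          (fun s hs => blockSize_growth (by omega) (hgrowth (s + 1) (by omega) hs))
          (by rw [sum_range_blockSize hm0, blockEnd_succ_self]) hc hmass
          (fun s hs he => hc₁ s hs.le (s + 1) hs (by have := Nat.even_iff.1 he; omega))
          (fun s hs ho => hc₂ s hs.le (s + 1) hs (by have := Nat.odd_iff.1 ho; omega)) hδ₁ hδ₂
    _ ≤ 2 * (1 / ((r : ℝ) - 1) + 2 * δ + 1 / r) := by
        rw [sum_range_blockSize hm0, blockEnd_of_le le_rfl]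
        gcongr

end StepMap

end Blocks

theorem sq_mul_le_of_lt_of_odd_pow {a x y : ℕ} (ha : 2 ≤ a)
    (hx : x ∈ {n | ∃ j : ℕ, 1 ≤ j ∧ n = a ^ (2 * j - 1)})
    (hy : y ∈ {n | ∃ j : ℕ, 1 ≤ j ∧ n = a ^ (2 * j - 1)}) (hxy : x < y) : a ^ 2 * x ≤ y := by
  obtain ⟨i, hi, rfl⟩ := hx
  obtain ⟨j, hj, rfl⟩ := hy
  have := (Nat.pow_lt_pow_iff_right (by omega)).1 hxy
  rw [← pow_add]
  exact Nat.pow_le_pow_right (by omega) (by omega)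

theorem two_mul_inv_sq_add_le {ε a : ℝ} (hε : 0 < ε) (ha : 32 / ε + 2 ≤ a) :
    2 * (1 / (a ^ 2 - 1) + 2 * (ε / 8) + 1 / a ^ 2) ≤ ε := by
  have h32 : 0 < 32 / ε := by positivity
  have ha2 : 2 ≤ a := by linarith
  have hεa : 32 ≤ ε * a := by
    have := (div_le_iff₀ hε).1 (show 32 / ε ≤ a by linarith)
    linarith
  set u := 1 / a ^ 2 with hu
  have h₁ : 1 / (a ^ 2 - 1) ≤ 2 * u := by
    rw [hu, div_le_iff₀ (by nlinarith)]
    field_simp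
    nlinarith
  have h₂ : 6 * u ≤ ε / 2 := by
    rw [hu]
    field_simp
    nlinarith
  linarith

end StepConcentration

open StepConcentration in
/-- concentration inequality for step preserving maps on the positive spheres
of `ℓ∞^k` and `ℓ1^k`, along the set `Q = {a^(2j-1) : j ≥ 1}` where `a = ⌈32/ε + 2⌉`. -/
theorem stmt_2 (d : ℕ) (hd : 1 ≤ d) (ε : ℝ) (hε : 0 < ε)
    (Q : Set ℕ) (hQ : Q = {n | ∃ j : ℕ, 1 ≤ j ∧ n = (⌈(32 / ε + 2 : ℝ)⌉₊) ^ (2 * j - 1)})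
    (m : ℕ → ℕ) (hm0 : m 0 = 0)
    (hmono : ∀ s, s < d → m s < m (s + 1))
    (hmQ : ∀ s, 1 ≤ s → s ≤ d → m s ∈ Q)
    (k : ℕ) (hkQ : k ∈ Q) (hkm : m d < k)
    (F : (Fin k → ℝ) → (Fin k → ℝ))
    (hFmaps : ∀ x ∈ SplusInf k, F x ∈ SplusL1 k)
    (hstep : ∀ x ∈ SplusInf k, ∀ i j, x i = x j → F x i = F x j)
    (homega : ∀ x ∈ SplusInf k, ∀ y ∈ SplusInf k,
      supNorm (x - y) ≤ 1 / (d : ℝ) → l1Norm (F x - F y) ≤ ε / 8) :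
    l1Norm (F (zVec d k m) - fun _ => 1 / (k : ℝ)) ≤ ε := by
  set a := ⌈(32 / ε + 2 : ℝ)⌉₊
  have ha : 32 / ε + 2 ≤ (a : ℝ) := Nat.le_ceil _
  have ha2 : 2 ≤ a := by
    have : (2 : ℝ) ≤ a := by linarith [div_pos (by norm_num : (0 : ℝ) < 32) hε]
    exact_mod_cast this
  subst hQ
  have hgrowth : ∀ t, 1 ≤ t → t ≤ d → a ^ 2 * blockEnd d k m t ≤ blockEnd d k m (t + 1) :=
    fun t ht htd => sq_mul_le_of_lt_of_odd_pow ha2 (blockEnd_mem hmQ hkQ ht)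
      (blockEnd_mem hmQ hkQ (by omega)) (blockEnd_lt_succ hmono hkm htd)
  calc l1Norm (F (zVec d k m) - fun _ => 1 / (k : ℝ))
      ≤ 2 * (1 / (((a ^ 2 : ℕ) : ℝ) - 1) + 2 * (ε / 8) + 1 / ((a ^ 2 : ℕ) : ℝ)) :=
        l1Norm_map_zVec_sub_le hd hm0 hmono hkm (by nlinarith) hgrowth hFmaps hstep homega
    _ ≤ ε := by
        push_cast
        exact two_mul_inv_sq_add_le hε ha
end

section
/- Let X be a real normed space and (e_i)_{i≥1} a normalized 1-unconditional sequence in X. Then there exists a subset P ⊆ ℕ such that for all k ≥ 1, ψ_P(k) ≥ (ψ(k) − 1)/2. -/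
/-!
Split `{1, …, k}` greedily: put `k + 1` on the side whose partial sum currently has the smaller
norm. By `1`-unconditionality adding a unit vector to a side can only increase its norm, and by at
most `1`, so the two norms `A`, `B` never differ by more than `1`. Hence
`min A B ≥ (A + B - 1) / 2 ≥ (ψ(k) - 1) / 2`, by the triangle inequality.
-/

/-- `ψ(k) = ‖∑_{i=1}^k e_i‖`. -/
noncomputable def psi {X : Type*} [NormedAddCommGroup X] (e : ℕ → X) (k : ℕ) : ℝ :=
  ‖∑ i ∈ Finset.Icc 1 k, e i‖

/-- `ψ_P(k) = min(‖∑_{i ≤ k, i ∈ P} e_i‖, ‖∑_{i ≤ k, i ∉ P} e_i‖)`. -/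
noncomputable def psiP {X : Type*} [NormedAddCommGroup X] (e : ℕ → X) (P : Set ℕ)
    (k : ℕ) : ℝ :=
  min ‖∑ i ∈ Finset.Icc 1 k, Set.indicator P e i‖
      ‖∑ i ∈ Finset.Icc 1 k, Set.indicator Pᶜ e i‖

open Finset

lemma abs_sub_le_of_grow_smaller {a b a' c : ℝ} (h : |a - b| ≤ c) (hab : a ≤ b) (ha' : a ≤ a')
    (ha'c : a' ≤ a + c) : |a' - b| ≤ c := by
  rw [abs_le] at h ⊢
  constructor <;> linarith

lemma div_two_sub_le_min_of_abs_sub_le {a b c : ℝ} (h : |a - b| ≤ c) :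
    (a + b - c) / 2 ≤ min a b := by
  rw [abs_le] at h
  rcases le_total a b with hab | hab
  · rw [min_eq_left hab]; linarith
  · rw [min_eq_right hab]; linarith

section Greedy

variable {X : Type*} [NormedAddCommGroup X] (e : ℕ → X)

/-- One side of the greedy split of `{1, …, k}`; the other side is `Icc 1 k \ greedySet e k`. -/
noncomputable def greedySet : ℕ → Finset ℕ
  | 0 => ∅
  | k + 1 =>
    if ‖∑ i ∈ greedySet k, e i‖ ≤ ‖∑ i ∈ Icc 1 k \ greedySet k, e i‖ then
      insert (k + 1) (greedySet k)
    else greedySet k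

def greedyPart : Set ℕ :=
  {i | i ∈ greedySet e i}

noncomputable instance : DecidablePred (· ∈ greedyPart e) :=
  fun i => inferInstanceAs (Decidable (i ∈ greedySet e i))

lemma greedySet_subset_Icc (k : ℕ) : greedySet e k ⊆ Icc 1 k := by
  induction k with
  | zero => simp [greedySet]
  | succ k ih =>
    have hIcc : Icc 1 k ⊆ Icc 1 (k + 1) := Icc_subset_Icc le_rfl (Nat.le_succ k)
    rw [greedySet]
    split_ifs
    · exact insert_subset (by simp) (ih.trans hIcc)
    · exact ih.trans hIcc

lemma succ_notMem_greedySet (k : ℕ) : k + 1 ∉ greedySet e k :=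
  fun h => by simpa using greedySet_subset_Icc e k h

lemma filter_Icc_mem_greedyPart (k : ℕ) :
    {i ∈ Icc 1 k | i ∈ greedyPart e} = greedySet e k := by
  induction k with
  | zero => simp [greedySet]
  | succ k ih =>
    rw [← insert_Icc_right_eq_Icc_add_one (Nat.le_add_left 1 k), filter_insert, ih]
    change (if k + 1 ∈ greedySet e (k + 1) then _ else _) = _
    rw [greedySet]
    split_ifs <;> simp_all [succ_notMem_greedySet]

lemma sum_Icc_indicator_greedyPart (k : ℕ) :
    ∑ i ∈ Icc 1 k, (greedyPart e).indicator e i = ∑ i ∈ greedySet e k, e i := by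
  rw [sum_indicator_eq_sum_filter (t := fun _ => greedyPart e), filter_Icc_mem_greedyPart]

lemma sum_Icc_indicator_compl_greedyPart (k : ℕ) :
    ∑ i ∈ Icc 1 k, (greedyPart e)ᶜ.indicator e i = ∑ i ∈ Icc 1 k \ greedySet e k, e i := by
  rw [sum_indicator_eq_sum_filter (t := fun _ => (greedyPart e)ᶜ)]
  simp only [Set.mem_compl_iff]
  rw [filter_not, filter_Icc_mem_greedyPart]

variable {e}

lemma norm_sum_insert_le {s : Finset ℕ} {j : ℕ} (hj : j ∉ s) :
    ‖∑ i ∈ insert j s, e i‖ ≤ ‖∑ i ∈ s, e i‖ + ‖e j‖ := by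
  rw [sum_insert hj, add_comm]
  exact norm_add_le _ _

lemma abs_norm_sum_greedySet_sub_le {c : ℝ} (hc : 0 ≤ c) (hle : ∀ i, 1 ≤ i → ‖e i‖ ≤ c)
    (hmono : ∀ s t : Finset ℕ, s ⊆ t → ‖∑ i ∈ s, e i‖ ≤ ‖∑ i ∈ t, e i‖) (k : ℕ) :
    |‖∑ i ∈ greedySet e k, e i‖ - ‖∑ i ∈ Icc 1 k \ greedySet e k, e i‖| ≤ c := by
  induction k with
  | zero => simpa [greedySet] using hc
  | succ k ih =>
    have hek : ‖e (k + 1)‖ ≤ c := hle _ (Nat.le_add_left 1 k)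
    have hnot : k + 1 ∉ Icc 1 k \ greedySet e k := by simp
    rw [greedySet, ← insert_Icc_right_eq_Icc_add_one (Nat.le_add_left 1 k)]
    split_ifs with hsmaller
    · rw [insert_sdiff_insert, sdiff_insert_of_notMem (by simp)]
      refine abs_sub_le_of_grow_smaller ih hsmaller (hmono _ _ (subset_insert _ _)) ?_
      linarith [norm_sum_insert_le (e := e) (succ_notMem_greedySet e k)]
    · rw [insert_sdiff_of_notMem _ (succ_notMem_greedySet e k), abs_sub_comm]
      rw [abs_sub_comm] at ih
      refine abs_sub_le_of_grow_smaller ih (le_of_not_ge hsmaller)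
        (hmono _ _ (subset_insert _ _)) ?_
      linarith [norm_sum_insert_le (e := e) hnot]

end Greedy

lemma norm_sum_le_of_subset_of_unconditional {X : Type*} [NormedAddCommGroup X]
    [NormedSpace ℝ X] {e : ℕ → X}
    (huncond : ∀ (s : Finset ℕ) (a b : ℕ → ℝ), (∀ i ∈ s, |a i| ≤ |b i|) →
      ‖∑ i ∈ s, a i • e i‖ ≤ ‖∑ i ∈ s, b i • e i‖)
    {s t : Finset ℕ} (hst : s ⊆ t) : ‖∑ i ∈ s, e i‖ ≤ ‖∑ i ∈ t, e i‖ := by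
  classical
  have h := huncond t (fun i => if i ∈ s then 1 else 0) (fun _ => 1)
    (fun i _ => by split_ifs <;> norm_num)
  simpa only [ite_smul, one_smul, zero_smul, ← sum_filter, filter_mem_eq_inter,
    inter_eq_right.mpr hst] using h

/-- for every normalized `1`-unconditional sequence `(e_i)_{i ≥ 1}` there is a
set `P ⊆ ℕ` such that `ψ_P(k) ≥ (ψ(k) - 1)/2` for all `k ≥ 1`. -/
theorem stmt_3 {X : Type*} [NormedAddCommGroup X] [NormedSpace ℝ X] (e : ℕ → X)
    (hnorm : ∀ i, 1 ≤ i → ‖e i‖ = 1)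
    (huncond : ∀ (s : Finset ℕ) (a b : ℕ → ℝ), (∀ i ∈ s, |a i| ≤ |b i|) →
      ‖∑ i ∈ s, a i • e i‖ ≤ ‖∑ i ∈ s, b i • e i‖) :
    ∃ P : Set ℕ, ∀ k, 1 ≤ k → (psi e k - 1) / 2 ≤ psiP e P k := by
  refine ⟨greedyPart e, fun k _ => ?_⟩
  have hclose := abs_norm_sum_greedySet_sub_le zero_le_one (fun i hi => (hnorm i hi).le)
    (fun _ _ => norm_sum_le_of_subset_of_unconditional huncond) k
  have hsplit : psi e k ≤
      ‖∑ i ∈ greedySet e k, e i‖ + ‖∑ i ∈ Icc 1 k \ greedySet e k, e i‖ := by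
    rw [psi, ← sum_sdiff (greedySet_subset_Icc e k), add_comm]
    exact norm_add_le _ _
  rw [psiP, sum_Icc_indicator_greedyPart, sum_Icc_indicator_compl_greedyPart]
  linarith [div_two_sub_le_min_of_abs_sub_le hclose]
end

section
/- Let ε > 0, d ∈ ℕ with d ≥ 1, and 1 ≤ q ≤ p < ∞. Let X be a real normed space and (e_i)_{i≥1} a normalized 1-unconditional sequence in X satisfying lower p and upper q estimates on block sequences with constant one. Let P ⊆ ℕ satisfy ψ_P(k) ≥ (ψ(k) − 1)/2 for all k, and let M = {k_1 < k_2 < …} ⊆ ℕ satisfy ψ(k_{j+1}) ≥ (8·d^(1/q−1/p)/ε + 2)·ψ(k_j) + 1 for all j ≥ 1. Then for all m̄, n̄ ∈ [M]^d with m_1 < n_1 < … < m_d < n_d (with m_0 = n_0 = 0), all real scalars (λ_s)_{s=1}^d, and each Q ∈ {P, P^c}: (i) if ‖∑_{s=1}^d λ_s·1_{(n_{s−1},n_s]∩Q}‖ ≤ 1 then ‖∑_{s=1}^d λ_s·1_{(n_{s−1},m_s]}‖ ≤ ε/4; and (ii) if ‖∑_{s=1}^d λ_s·1_{(m_{s−1},m_s]∩Q}‖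 ≤ 1 then ‖∑_{s=1}^d λ_s·1_{(m_{s−1},n_{s−1}]}‖ ≤ ε/4. -/
/-!
Write `x_s` for the blocks of the sum assumed to have norm at most one and `y_s` for the
corresponding blocks of the sum to be estimated; `y_s = λ_s 1_{(a, b]}` sits inside
`x_s = λ_s 1_{(a, k] ∩ Q}` with `b, k ∈ M`, `b < k`. By 1-unconditionality `‖y_s‖ ≤ |λ_s| ψ(b)`,
while the hypothesis on `P` and the triangle inequality give
`‖x_s‖ ≥ |λ_s| ((ψ(k) - 1) / 2 - ψ(a))`, which the growth of `ψ` along `M` makes at least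
`(C / 2) |λ_s| ψ(b)` with `C = 8 d^(1/q - 1/p) / ε`. So `‖y_s‖ ≤ (2 / C) ‖x_s‖`, and the upper
`q` estimate, Hölder's inequality `‖·‖_q ≤ d^(1/q - 1/p) ‖·‖_p` on `d` terms and the lower `p`
estimate give `‖∑ y_s‖ ≤ (2 / C) d^(1/q - 1/p) ‖∑ x_s‖ ≤ ε / 4`.
-/

open Finset

theorem Lq_le_card_rpow_mul_Lp_of_nonneg {ι : Type*} (s : Finset ι) {f : ι → ℝ}
    (hf : ∀ i ∈ s, 0 ≤ f i) {p q : ℝ} (hq : 0 < q) (hqp : q ≤ p) :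
    (∑ i ∈ s, f i ^ q) ^ (1 / q) ≤ (#s : ℝ) ^ (1 / q - 1 / p) * (∑ i ∈ s, f i ^ p) ^ (1 / p) := by
  have hp : 0 < p := hq.trans_le hqp
  have hfq : ∀ i ∈ s, 0 ≤ f i ^ q := fun i hi => Real.rpow_nonneg (hf i hi) q
  have h := Real.rpow_sum_le_const_mul_sum_rpow_of_nonneg (p := p / q) s
    ((one_le_div hq).2 hqp) hfq
  rw [Finset.sum_congr rfl fun i hi => (Real.rpow_mul (hf i hi) q (p / q)).symm,
    mul_div_cancel₀ p hq.ne'] at h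
  have h' := Real.rpow_le_rpow (Real.rpow_nonneg (sum_nonneg hfq) _) h (one_div_pos.2 hp).le
  rwa [← Real.rpow_mul (sum_nonneg hfq), Real.mul_rpow (by positivity)
    (sum_nonneg fun i hi => Real.rpow_nonneg (hf i hi) p), ← Real.rpow_mul (by positivity),
    show p / q * (1 / p) = 1 / q by field_simp,
    show (p / q - 1) * (1 / p) = 1 / q - 1 / p by field_simp] at h'

lemma sum_Icc_one_eq_sum_range {M : Type*} [AddCommMonoid M] (f : ℕ → M) (d : ℕ) :
    ∑ s ∈ Icc 1 d, f s = ∑ i ∈ range d, f (i + 1) := by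
  rw [← Ico_add_one_right_eq_Icc, sum_Ico_eq_sum_range]
  simp [add_comm]

section

variable {X : Type*} [NormedAddCommGroup X]

lemma psi_eq_norm_sum_Ioc (e : ℕ → X) (k : ℕ) : psi e k = ‖∑ i ∈ Ioc 0 k, e i‖ := by
  rw [psi, ← Icc_add_one_left_eq_Ioc, zero_add]

lemma psi_zero (e : ℕ → X) : psi e 0 = 0 := by
  simp [psi]

lemma psiP_le_norm_sum_indicator (e : ℕ → X) {P Q : Set ℕ} (hQ : Q = P ∨ Q = Pᶜ) (k : ℕ) :
    psiP e P k ≤ ‖∑ i ∈ Icc 1 k, Q.indicator e i‖ := by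
  rcases hQ with rfl | rfl
  · exact min_le_left _ _
  · exact min_le_right _ _

end

section

variable {X : Type*} [NormedAddCommGroup X] [NormedSpace ℝ X] {e : ℕ → X} {p q : ℝ}

def OneUnconditional (e : ℕ → X) : Prop :=
  ∀ (s : Finset ℕ) (a b : ℕ → ℝ), (∀ i ∈ s, |a i| ≤ |b i|) →
    ‖∑ i ∈ s, a i • e i‖ ≤ ‖∑ i ∈ s, b i • e i‖

def BlockEstimates (p q : ℝ) (e : ℕ → X) : Prop :=
  ∀ (N : ℕ) (x : ℕ → X) (s : ℕ → ℕ),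
    (∀ i, i < N → s i < s (i + 1)) →
    (∀ i, i < N → x i ∈ Submodule.span ℝ (e '' {j | s i ≤ j ∧ j < s (i + 1)})) →
    (∑ i ∈ Finset.range N, ‖x i‖ ^ p) ^ (1 / p) ≤ ‖∑ i ∈ Finset.range N, x i‖ ∧
      ‖∑ i ∈ Finset.range N, x i‖ ≤ (∑ i ∈ Finset.range N, ‖x i‖ ^ q) ^ (1 / q)

lemma Set.indicator_eq_indicator_one_smul (Q : Set ℕ) (e : ℕ → X) (i : ℕ) :
    Q.indicator e i = Q.indicator (fun _ => (1 : ℝ)) i • e i := by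
  by_cases h : i ∈ Q <;> simp [h]

lemma Set.indicator_mem_span_image (Q : Set ℕ) (e : ℕ → X) {S : Set ℕ} {i : ℕ} (hi : i ∈ S) :
    Q.indicator e i ∈ Submodule.span ℝ (e '' S) := by
  rw [Set.indicator_eq_indicator_one_smul]
  exact Submodule.smul_mem _ _ (Submodule.subset_span ⟨i, hi, rfl⟩)

namespace OneUnconditional

lemma norm_sum_smul_le (he : OneUnconditional e) {A B : Finset ℕ} (hAB : A ⊆ B) {c : ℕ → ℝ}
    (hc : ∀ i ∈ A, |c i| ≤ 1) :
    ‖∑ i ∈ A, c i • e i‖ ≤ ‖∑ i ∈ B, e i‖ := by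
  classical
  have h := he B (fun i => if i ∈ A then c i else 0) 1 fun i _ => by
    split_ifs with hi
    · simpa using hc i hi
    · simp
  simpa [ite_smul, sum_ite_mem, inter_eq_right.2 hAB] using h

lemma norm_sum_indicator_le (he : OneUnconditional e) (Q : Set ℕ) {A B : Finset ℕ}
    (hAB : A ⊆ B) :
    ‖∑ i ∈ A, Q.indicator e i‖ ≤ ‖∑ i ∈ B, e i‖ := by
  simp_rw [Set.indicator_eq_indicator_one_smul Q e]
  refine he.norm_sum_smul_le hAB fun i _ => ?_
  by_cases h : i ∈ Q <;> simp [h]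

lemma norm_sum_le (he : OneUnconditional e) {A B : Finset ℕ} (hAB : A ⊆ B) :
    ‖∑ i ∈ A, e i‖ ≤ ‖∑ i ∈ B, e i‖ := by
  simpa using he.norm_sum_smul_le hAB (c := 1) (by simp)

lemma norm_sum_Ioc_le_psi (he : OneUnconditional e) (a b : ℕ) :
    ‖∑ i ∈ Ioc a b, e i‖ ≤ psi e b := by
  rw [psi_eq_norm_sum_Ioc]
  exact he.norm_sum_le (Ioc_subset_Ioc_left (Nat.zero_le a))

lemma monotone_psi (he : OneUnconditional e) : Monotone (psi e) := fun a b hab => by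
  simpa [psi_eq_norm_sum_Ioc] using he.norm_sum_le (Ioc_subset_Ioc_right hab)

end OneUnconditional

theorem BlockEstimates.norm_sum_le_mul (hb : BlockEstimates p q e) (hq : 0 < q) (hqp : q ≤ p)
    {N : ℕ} {s : ℕ → ℕ} (hs : ∀ i, i < N → s i < s (i + 1)) {x y : ℕ → X}
    (hx : ∀ i, i < N → x i ∈ Submodule.span ℝ (e '' {j | s i ≤ j ∧ j < s (i + 1)}))
    (hy : ∀ i, i < N → y i ∈ Submodule.span ℝ (e '' {j | s i ≤ j ∧ j < s (i + 1)}))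
    {c : ℝ} (hc : 0 ≤ c) (hxy : ∀ i, i < N → ‖y i‖ ≤ c * ‖x i‖) :
    ‖∑ i ∈ range N, y i‖ ≤ c * N ^ (1 / q - 1 / p) * ‖∑ i ∈ range N, x i‖ := by
  have hxq : 0 ≤ ∑ i ∈ range N, ‖x i‖ ^ q :=
    sum_nonneg fun i _ => Real.rpow_nonneg (norm_nonneg _) q
  calc ‖∑ i ∈ range N, y i‖ ≤ (∑ i ∈ range N, ‖y i‖ ^ q) ^ (1 / q) :=
        (hb N y s hs hy).2
    _ ≤ (∑ i ∈ range N, c ^ q * ‖x i‖ ^ q) ^ (1 / q) := by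
        gcongr with i hi
        rw [← Real.mul_rpow hc (norm_nonneg _)]
        exact Real.rpow_le_rpow (norm_nonneg _) (hxy i (mem_range.1 hi)) hq.le
    _ = c * (∑ i ∈ range N, ‖x i‖ ^ q) ^ (1 / q) := by
        rw [← mul_sum, Real.mul_rpow (Real.rpow_nonneg hc q) hxq,
          one_div, Real.rpow_rpow_inv hc hq.ne']
    _ ≤ c * (N ^ (1 / q - 1 / p) * (∑ i ∈ range N, ‖x i‖ ^ p) ^ (1 / p)) := by
        gcongr
        simpa using Lq_le_card_rpow_mul_Lp_of_nonneg (range N)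
          (fun i _ => norm_nonneg (x i)) hq hqp
    _ ≤ c * N ^ (1 / q - 1 / p) * ‖∑ i ∈ range N, x i‖ := by
        rw [mul_assoc]
        gcongr
        exact (hb N x s hs hx).1

theorem norm_sum_Ioc_le_mul (he : OneUnconditional e) (hb : BlockEstimates p q e) (hq : 0 < q)
    (hqp : q ≤ p) {d : ℕ} {α β : ℕ → ℕ} (hα : ∀ s, 1 ≤ s → s < d → α s < α (s + 1))
    (hβ : ∀ s, 1 ≤ s → s ≤ d → β s ≤ α s) (lam : ℕ → ℝ) (Q : Set ℕ) {c : ℝ} (hc : 0 ≤ c)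
    (hψ : ∀ s, 1 ≤ s → s ≤ d →
      psi e (β s) ≤ c * ‖∑ i ∈ Ioc (α (s - 1)) (α s), Q.indicator e i‖) :
    ‖∑ s ∈ Icc 1 d, lam s • ∑ i ∈ Ioc (α (s - 1)) (β s), e i‖ ≤
      c * d ^ (1 / q - 1 / p) *
        ‖∑ s ∈ Icc 1 d, lam s • ∑ i ∈ Ioc (α (s - 1)) (α s), Q.indicator e i‖ := by
  simp only [sum_Icc_one_eq_sum_range, Nat.add_sub_cancel]
  -- nothing is known about `α 0`, so the first block starts at `0`
  set t : ℕ → ℕ := fun i => if i = 0 then 0 else α i + 1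
  have ht : ∀ i, i < d → t i < t (i + 1) := by
    rintro (_ | i) hi
    · simp [t]
    · simpa [t] using hα (i + 1) (by omega) hi
  have hblock : ∀ i, i < d → ∀ j ∈ Ioc (α i) (α (i + 1)), t i ≤ j ∧ j < t (i + 1) := by
    rintro (_ | i) _ j hj <;> simp only [mem_Ioc, zero_add] at hj <;> simp [t] <;> omega
  refine hb.norm_sum_le_mul hq hqp ht (fun i hi => ?_) (fun i hi => ?_) hc fun i hi => ?_
  · exact Submodule.smul_mem _ _ <| Submodule.sum_mem _ fun j hj =>
      Set.indicator_mem_span_image Q e (hblock i hi j hj)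
  · exact Submodule.smul_mem _ _ <| Submodule.sum_mem _ fun j hj => Submodule.subset_span
      ⟨j, hblock i hi j (Ioc_subset_Ioc_right (hβ (i + 1) (by omega) hi) hj), rfl⟩
  · rw [norm_smul, norm_smul, mul_left_comm]
    gcongr
    exact (he.norm_sum_Ioc_le_psi _ _).trans (by simpa using hψ (i + 1) (by omega) hi)

lemma psi_add_le_of_lt (he : OneUnconditional e) {kseq : ℕ → ℕ}
    (hkmono : ∀ j, 1 ≤ j → kseq j < kseq (j + 1)) {C : ℝ}
    (hgrowth : ∀ j, 1 ≤ j → (C + 2) * psi e (kseq j) + 1 ≤ psi e (kseq (j + 1)))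
    {a b : ℕ} (ha : ∃ j, 1 ≤ j ∧ a = kseq j) (hb : ∃ l, 1 ≤ l ∧ b = kseq l) (hab : a < b) :
    (C + 2) * psi e a + 1 ≤ psi e b := by
  have hmono : StrictMono fun j => kseq (j + 1) :=
    strictMono_nat_of_lt_succ fun j => hkmono (j + 1) (by omega)
  obtain ⟨j, hj, rfl⟩ := ha
  obtain ⟨l, hl, rfl⟩ := hb
  obtain ⟨j, rfl⟩ : ∃ j', j = j' + 1 := ⟨j - 1, by omega⟩
  obtain ⟨l, rfl⟩ : ∃ l', l = l' + 1 := ⟨l - 1, by omega⟩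
  have hjl : j + 1 ≤ l := hmono.lt_iff_lt.1 hab
  exact (hgrowth (j + 1) hj).trans (he.monotone_psi (hmono.monotone hjl))

lemma sub_psi_le_norm_sum_Ioc_indicator (he : OneUnconditional e) {Q : Set ℕ}
    (hQ : ∀ k, (psi e k - 1) / 2 ≤ ‖∑ i ∈ Icc 1 k, Q.indicator e i‖) {a k : ℕ} (hak : a ≤ k) :
    (psi e k - 1) / 2 - psi e a ≤ ‖∑ i ∈ Ioc a k, Q.indicator e i‖ := by
  have hsplit := norm_add_le (∑ i ∈ Ioc 0 a, Q.indicator e i) (∑ i ∈ Ioc a k, Q.indicator e i)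
  rw [sum_Ioc_consecutive _ (Nat.zero_le a) hak, ← Icc_add_one_left_eq_Ioc, zero_add] at hsplit
  have hhead : ‖∑ i ∈ Ioc 0 a, Q.indicator e i‖ ≤ psi e a := by
    rw [psi_eq_norm_sum_Ioc]
    exact he.norm_sum_indicator_le Q subset_rfl
  linarith [hQ k]

lemma psi_le_of_growth (he : OneUnconditional e) {Q : Set ℕ}
    (hQ : ∀ k, (psi e k - 1) / 2 ≤ ‖∑ i ∈ Icc 1 k, Q.indicator e i‖) {C : ℝ} (hC : 0 < C)
    {a b k : ℕ} (hab : a ≤ b) (hbk : b ≤ k) (hgrowth : (C + 2) * psi e b + 1 ≤ psi e k) :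
    psi e b ≤ 2 / C * ‖∑ i ∈ Ioc a k, Q.indicator e i‖ := by
  have hlower := sub_psi_le_norm_sum_Ioc_indicator he hQ (hab.trans hbk)
  have hψ := he.monotone_psi hab
  rw [div_mul_eq_mul_div, le_div_iff₀ hC]
  linarith

end

theorem stmt_4_general {X : Type*} [NormedAddCommGroup X] [NormedSpace ℝ X]
    (ε : ℝ) (hε : 0 < ε) (d : ℕ) (hd : 1 ≤ d)
    (q p : ℝ) (hq : 1 ≤ q) (hqp : q ≤ p)
    (e : ℕ → X)
    (huncond : ∀ (s : Finset ℕ) (a b : ℕ → ℝ), (∀ i ∈ s, |a i| ≤ |b i|) →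
      ‖∑ i ∈ s, a i • e i‖ ≤ ‖∑ i ∈ s, b i • e i‖)
    (hblock : ∀ (N : ℕ) (x : ℕ → X) (s : ℕ → ℕ),
      (∀ i, i < N → s i < s (i + 1)) →
      (∀ i, i < N → x i ∈ Submodule.span ℝ (e '' {j | s i ≤ j ∧ j < s (i + 1)})) →
      (∑ i ∈ Finset.range N, ‖x i‖ ^ p) ^ (1 / p) ≤ ‖∑ i ∈ Finset.range N, x i‖ ∧
        ‖∑ i ∈ Finset.range N, x i‖ ≤ (∑ i ∈ Finset.range N, ‖x i‖ ^ q) ^ (1 / q))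
    (P : Set ℕ)
    (hP : ∀ k, (psi e k - 1) / 2 ≤ psiP e P k)
    (kseq : ℕ → ℕ)
    (hkmono : ∀ j, 1 ≤ j → kseq j < kseq (j + 1))
    (hgrowth : ∀ j, 1 ≤ j →
      (8 * (d : ℝ) ^ ((1 : ℝ) / q - 1 / p) / ε + 2) * psi e (kseq j) + 1 ≤
        psi e (kseq (j + 1)))
    (m n : ℕ → ℕ) (hn0 : n 0 = 0)
    (hmM : ∀ s, 1 ≤ s → s ≤ d → ∃ j, 1 ≤ j ∧ m s = kseq j)
    (hnM : ∀ s, 1 ≤ s → s ≤ d → ∃ j, 1 ≤ j ∧ n s = kseq j)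
    (hint1 : ∀ s, 1 ≤ s → s ≤ d → m s < n s)
    (hint2 : ∀ s, 1 ≤ s → s < d → n s < m (s + 1))
    (lam : ℕ → ℝ) (Q : Set ℕ) (hQ : Q = P ∨ Q = Pᶜ) :
    (‖∑ s ∈ Finset.Icc 1 d, lam s • ∑ i ∈ Finset.Ioc (n (s - 1)) (n s),
          Set.indicator Q e i‖ ≤ 1 →
      ‖∑ s ∈ Finset.Icc 1 d, lam s • ∑ i ∈ Finset.Ioc (n (s - 1)) (m s), e i‖ ≤ ε / 4) ∧
    (‖∑ s ∈ Finset.Icc 1 d, lam s • ∑ i ∈ Finset.Ioc (m (s - 1)) (m s),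
          Set.indicator Q e i‖ ≤ 1 →
      ‖∑ s ∈ Finset.Icc 1 d, lam s • ∑ i ∈ Finset.Ioc (m (s - 1)) (n (s - 1)), e i‖ ≤ ε / 4) := by
  set C := 8 * (d : ℝ) ^ ((1 : ℝ) / q - 1 / p) / ε with hC_def
  have hdδ : 0 < (d : ℝ) ^ ((1 : ℝ) / q - 1 / p) := by positivity
  have hC : 0 < C := by positivity
  have hconst : ∀ r : ℝ, r ≤ 1 → 2 / C * d ^ (1 / q - 1 / p) * r ≤ ε / 4 := fun r hr => by
    have : 2 / C * d ^ (1 / q - 1 / p) = ε / 4 := by rw [hC_def]; field_simp; ring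
    rw [this]
    exact mul_le_of_le_one_right (by positivity) hr
  have hPQ := fun k => (hP k).trans (psiP_le_norm_sum_indicator e hQ k)
  have hnm_lt : ∀ s, 2 ≤ s → s ≤ d → n (s - 1) < m s := fun s hs hsd => by
    simpa [Nat.sub_add_cancel (by omega : 1 ≤ s)] using hint2 (s - 1) (by omega) (by omega)
  have hnm_le : ∀ s, 1 ≤ s → s ≤ d → n (s - 1) ≤ m s := fun s hs hsd => by
    rcases Nat.lt_or_ge 1 s with hs' | hs'
    · exact (hnm_lt s hs' hsd).le
    · simp [show s = 1 by omega, hn0]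
  have hq0 : 0 < q := by linarith
  refine ⟨fun h => hconst _ h |>.trans' ?_, fun h => hconst _ h |>.trans' ?_⟩
  · refine norm_sum_Ioc_le_mul huncond hblock hq0 hqp
      (fun s hs hsd => (hint2 s hs hsd).trans (hint1 (s + 1) (by omega) hsd))
      (fun s hs hsd => (hint1 s hs hsd).le) lam Q (by positivity) fun s hs hsd => ?_
    exact psi_le_of_growth huncond hPQ hC (hnm_le s hs hsd) (hint1 s hs hsd).le
      (psi_add_le_of_lt huncond hkmono hgrowth (hmM s hs hsd) (hnM s hs hsd) (hint1 s hs hsd))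
  · refine norm_sum_Ioc_le_mul huncond hblock hq0 hqp
      (fun s hs hsd => (hint1 s hs hsd.le).trans (hint2 s hs hsd)) hnm_le lam Q (by positivity)
      fun s hs hsd => ?_
    rcases Nat.lt_or_ge 1 s with hs' | hs'
    · exact psi_le_of_growth huncond hPQ hC (hint1 (s - 1) (by omega) (by omega)).le
        (hnm_lt s hs' hsd).le (psi_add_le_of_lt huncond hkmono hgrowth
          (hnM (s - 1) (by omega) (by omega)) (hmM s hs hsd) (hnm_lt s hs' hsd))
    · rw [show s = 1 by omega, Nat.sub_self, hn0, psi_zero]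
      positivity

/-- Lemma 3.2 of the paper: estimates obtained from lower `p` and upper `q`
estimates on block sequences and the growth of `ψ` along `M = {k_1 < k_2 < …}`. -/
theorem stmt_4 {X : Type*} [NormedAddCommGroup X] [NormedSpace ℝ X]
    (ε : ℝ) (hε : 0 < ε) (d : ℕ) (hd : 1 ≤ d)
    (q p : ℝ) (hq : 1 ≤ q) (hqp : q ≤ p)
    (e : ℕ → X)
    (hnorm : ∀ i, 1 ≤ i → ‖e i‖ = 1)
    (huncond : ∀ (s : Finset ℕ) (a b : ℕ → ℝ), (∀ i ∈ s, |a i| ≤ |b i|) →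
      ‖∑ i ∈ s, a i • e i‖ ≤ ‖∑ i ∈ s, b i • e i‖)
    (hblock : ∀ (N : ℕ) (x : ℕ → X) (s : ℕ → ℕ),
      (∀ i, i < N → s i < s (i + 1)) →
      (∀ i, i < N → x i ∈ Submodule.span ℝ (e '' {j | s i ≤ j ∧ j < s (i + 1)})) →
      (∑ i ∈ Finset.range N, ‖x i‖ ^ p) ^ (1 / p) ≤ ‖∑ i ∈ Finset.range N, x i‖ ∧
        ‖∑ i ∈ Finset.range N, x i‖ ≤ (∑ i ∈ Finset.range N, ‖x i‖ ^ q) ^ (1 / q))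
    (P : Set ℕ)
    (hP : ∀ k, (psi e k - 1) / 2 ≤ psiP e P k)
    (kseq : ℕ → ℕ)
    (hkmono : ∀ j, 1 ≤ j → kseq j < kseq (j + 1))
    (hgrowth : ∀ j, 1 ≤ j →
      (8 * (d : ℝ) ^ ((1 : ℝ) / q - 1 / p) / ε + 2) * psi e (kseq j) + 1 ≤
        psi e (kseq (j + 1)))
    (m n : ℕ → ℕ) (hm0 : m 0 = 0) (hn0 : n 0 = 0)
    (hmM : ∀ s, 1 ≤ s → s ≤ d → ∃ j, 1 ≤ j ∧ m s = kseq j)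
    (hnM : ∀ s, 1 ≤ s → s ≤ d → ∃ j, 1 ≤ j ∧ n s = kseq j)
    (hint1 : ∀ s, 1 ≤ s → s ≤ d → m s < n s)
    (hint2 : ∀ s, 1 ≤ s → s < d → n s < m (s + 1))
    (lam : ℕ → ℝ) (Q : Set ℕ) (hQ : Q = P ∨ Q = Pᶜ) :
    (‖∑ s ∈ Finset.Icc 1 d, lam s • ∑ i ∈ Finset.Ioc (n (s - 1)) (n s),
          Set.indicator Q e i‖ ≤ 1 →
      ‖∑ s ∈ Finset.Icc 1 d, lam s • ∑ i ∈ Finset.Ioc (n (s - 1)) (m s), e i‖ ≤ ε / 4) ∧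
    (‖∑ s ∈ Finset.Icc 1 d, lam s • ∑ i ∈ Finset.Ioc (m (s - 1)) (m s),
          Set.indicator Q e i‖ ≤ 1 →
      ‖∑ s ∈ Finset.Icc 1 d, lam s • ∑ i ∈ Finset.Ioc (m (s - 1)) (n (s - 1)), e i‖ ≤ ε / 4) :=
  stmt_4_general ε hε d hd q p hq hqp e huncond hblock P hP kseq hkmono hgrowth m n hn0 hmM hnM
    hint1 hint2 lam Q hQ
end

section
/- Let d ∈ ℕ with d ≥ 1, ε > 0, and 1 ≤ r < ∞. Let M = {a^(j−1) : j ≥ 1} ⊆ ℕ where a = ⌈(8/ε + 3)^r⌉. Let m̄, n̄ ∈ [M]^d with m_1 < n_1 < … < m_d < n_d and let k > n_d. Let F : S_{ℓ∞^k} → S_{ℓ_r^k} be a map that is both support preserving and step preserving. Then ‖F(z(m̄)) − F(z(n̄))‖_r > 1 − ε. -/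
/-- The `ℓ_r` norm on `ℝ^k`. -/
noncomputable def lrNorm (r : ℝ) {k : ℕ} (x : Fin k → ℝ) : ℝ :=
  (∑ i, |x i| ^ r) ^ (1 / r)

open Finset

section Coordinates

variable {k : ℕ}

def finIco (k p q : ℕ) : Finset (Fin k) := {i | p ≤ (i : ℕ) ∧ (i : ℕ) < q}

@[simp]
lemma mem_finIco {p q : ℕ} {i : Fin k} : i ∈ finIco k p q ↔ p ≤ i ∧ (i : ℕ) < q := by
  simp [finIco]

lemma finIco_subset_finIco {p q p' q' : ℕ} (hp : p' ≤ p) (hq : q ≤ q') :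
    finIco k p q ⊆ finIco k p' q' := fun i hi => by
  rw [mem_finIco] at hi ⊢
  omega

lemma card_finIco {p q : ℕ} (hqk : q ≤ k) : #(finIco k p q) = q - p := by
  rw [← card_map Fin.valEmbedding, ← Nat.card_Ico p q]
  congr 1
  ext j
  simp only [mem_map, mem_finIco, Fin.valEmbedding_apply, mem_Ico]
  exact ⟨fun ⟨i, hi, hij⟩ => hij ▸ hi, fun hj => ⟨⟨j, by omega⟩, hj, rfl⟩⟩

def stepBlock (k : ℕ) (m : ℕ → ℕ) (s : ℕ) : Finset (Fin k) := finIco k (m (s - 1)) (m s)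

lemma pairwiseDisjoint_stepBlock {d : ℕ} {m : ℕ → ℕ} (hm : MonotoneOn m (Set.Iic d)) :
    ((Icc 1 d : Finset ℕ) : Set ℕ).PairwiseDisjoint (stepBlock k m) := by
  have key : ∀ s ∈ Icc 1 d, ∀ t ∈ Icc 1 d, s < t →
      Disjoint (stepBlock k m s) (stepBlock k m t) := by
    intro s hs t ht hst
    rw [mem_Icc] at hs ht
    have : m s ≤ m (t - 1) := hm (by simp; omega) (by simp; omega) (by omega)
    rw [disjoint_left]
    intro i his hit
    simp only [stepBlock, mem_finIco] at his hit
    omega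
  intro s hs t ht hst
  rcases Nat.lt_or_gt_of_ne hst with h | h
  · exact key s hs t ht h
  · exact (key t ht s hs h).symm

end Coordinates

structure IsStepVector {k : ℕ} (d : ℕ) (m : ℕ → ℕ) (u : Fin k → ℝ) : Prop where
  const : ∀ s ∈ Icc 1 d, ∀ i ∈ stepBlock k m s, ∀ j ∈ stepBlock k m s, u i = u j
  support : ∀ i, u i ≠ 0 → ∃ s ∈ Icc 1 d, i ∈ stepBlock k m s

section StepVector

variable {d k : ℕ} {m : ℕ → ℕ}

lemma IsStepVector.of_preserving {x u : Fin k → ℝ} (hx : IsStepVector d m x)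
    (hstep : ∀ i j, x i = x j → u i = u j) (hsupp : ∀ i, u i ≠ 0 → x i ≠ 0) :
    IsStepVector d m u where
  const s hs i hi j hj := hstep i j (hx.const s hs i hi j hj)
  support i hi := hx.support i (hsupp i hi)

lemma zVec_apply_of_mem_stepBlock (hm : MonotoneOn m (Set.Iic d)) {s : ℕ} (hs : s ∈ Icc 1 d)
    {i : Fin k} (hi : i ∈ stepBlock k m s) : zVec d k m i = 1 - ((s : ℝ) - 1) / d := by
  rw [mem_Icc] at hs
  simp only [stepBlock, mem_finIco] at hi
  rw [zVec, sum_eq_single_of_mem s (mem_Icc.mpr hs)]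
  · simp [hi]
  · intro t ht hts
    rw [mem_Icc] at ht
    rcases Nat.lt_or_gt_of_ne hts with h | h
    · have : m t ≤ m (s - 1) := hm (by simp; omega) (by simp; omega) (by omega)
      simp only [mul_ite, mul_one, mul_zero]
      exact if_neg (by omega)
    · have : m s ≤ m (t - 1) := hm (by simp; omega) (by simp; omega) (by omega)
      simp only [mul_ite, mul_one, mul_zero]
      exact if_neg (by omega)

lemma isStepVector_zVec (hm : MonotoneOn m (Set.Iic d)) : IsStepVector d m (zVec d k m) where
  const s hs i hi j hj := by
    rw [zVec_apply_of_mem_stepBlock hm hs hi, zVec_apply_of_mem_stepBlock hm hs hj]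
  support i hi := by
    obtain ⟨s, hs, hne⟩ := exists_ne_zero_of_sum_ne_zero hi
    refine ⟨s, hs, ?_⟩
    by_contra h
    simp_all [stepBlock]

lemma supNorm_eq_one {x : Fin k → ℝ} (hle : ∀ i, |x i| ≤ 1) (i₀ : Fin k) (h : |x i₀| = 1) :
    supNorm x = 1 :=
  have : Nonempty (Fin k) := ⟨i₀⟩
  le_antisymm (ciSup_le hle) (h ▸ le_ciSup (f := fun i => |x i|) (Set.finite_range _).bddAbove i₀)

lemma supNorm_zVec (hd : 1 ≤ d) (hm : MonotoneOn m (Set.Iic d)) (hm0 : m 0 = 0) (hm1 : 0 < m 1)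
    (hk : 0 < k) : supNorm (zVec d k m) = 1 := by
  have hd' : (0 : ℝ) < d := by exact_mod_cast hd
  refine supNorm_eq_one (fun i => ?_) ⟨0, hk⟩ ?_
  · by_cases hi : zVec d k m i = 0
    · simp [hi]
    obtain ⟨s, hs, his⟩ := (isStepVector_zVec hm).support i hi
    rw [zVec_apply_of_mem_stepBlock hm hs his]
    have hs' : (1 : ℝ) ≤ s ∧ (s : ℝ) ≤ d := by exact_mod_cast mem_Icc.mp hs
    rw [abs_le]
    constructor
    · linarith [div_le_one_of_le₀ (by linarith : (s : ℝ) - 1 ≤ d) hd'.le]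
    · linarith [div_nonneg (by linarith : (0 : ℝ) ≤ s - 1) hd'.le]
  · rw [zVec_apply_of_mem_stepBlock hm (mem_Icc.mpr ⟨le_rfl, hd⟩) (by simp [stepBlock, hm0, hm1])]
    simp

end StepVector

section Density

variable {α : Type*} {A B : Finset α} {G : α → ℝ} {c : ℝ}

lemma sum_mul_card_eq_card_mul_sum (hAB : A ⊆ B) (hG : ∀ i ∈ B, ∀ j ∈ B, G i = G j) :
    (∑ i ∈ A, G i) * #B = #A * ∑ i ∈ B, G i := by
  rcases B.eq_empty_or_nonempty with rfl | ⟨j, hj⟩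
  · simp [subset_empty.mp hAB]
  rw [sum_congr rfl fun i hi => hG i (hAB hi) j hj, sum_congr rfl fun i hi => hG i hi j hj]
  simp only [sum_const, nsmul_eq_mul]
  ring

lemma sum_le_mul_sum_of_card_le (hAB : A ⊆ B) (hG : ∀ i ∈ B, ∀ j ∈ B, G i = G j)
    (hG0 : ∀ i ∈ B, 0 ≤ G i) (hc : (#A : ℝ) ≤ c * #B) : ∑ i ∈ A, G i ≤ c * ∑ i ∈ B, G i := by
  rcases B.eq_empty_or_nonempty with rfl | hB
  · simp [subset_empty.mp hAB]
  refine le_of_mul_le_mul_right ?_ (show (0 : ℝ) < #B by exact_mod_cast hB.card_pos)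
  calc (∑ i ∈ A, G i) * #B = #A * ∑ i ∈ B, G i := sum_mul_card_eq_card_mul_sum hAB hG
    _ ≤ c * #B * ∑ i ∈ B, G i := mul_le_mul_of_nonneg_right hc (sum_nonneg hG0)
    _ = c * (∑ i ∈ B, G i) * #B := by ring

lemma mul_sum_le_sum_of_le_card (hAB : A ⊆ B) (hG : ∀ i ∈ B, ∀ j ∈ B, G i = G j)
    (hG0 : ∀ i ∈ B, 0 ≤ G i) (hc : c * #B ≤ #A) : c * ∑ i ∈ B, G i ≤ ∑ i ∈ A, G i := by
  rcases B.eq_empty_or_nonempty with rfl | hB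
  · simp [subset_empty.mp hAB]
  refine le_of_mul_le_mul_right ?_ (show (0 : ℝ) < #B by exact_mod_cast hB.card_pos)
  calc c * (∑ i ∈ B, G i) * #B = c * #B * ∑ i ∈ B, G i := by ring
    _ ≤ #A * ∑ i ∈ B, G i := mul_le_mul_of_nonneg_right hc (sum_nonneg hG0)
    _ = (∑ i ∈ A, G i) * #B := (sum_mul_card_eq_card_mul_sum hAB hG).symm

end Density

lemma sum_rpow_eq_one_of_lrNorm_eq_one {k : ℕ} {r : ℝ} (hr : r ≠ 0) {u : Fin k → ℝ}
    (h : lrNorm r u = 1) : ∑ i, |u i| ^ r = 1 := by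
  rw [lrNorm, one_div] at h
  rw [← Real.rpow_inv_rpow (sum_nonneg fun i _ => by positivity) hr, h, Real.one_rpow]

lemma rpow_sum_le_lrNorm_sub_add {k : ℕ} {r : ℝ} (hr : 1 ≤ r) (T : Finset (Fin k))
    (u v : Fin k → ℝ) :
    (∑ i ∈ T, |u i| ^ r) ^ (1 / r) ≤ lrNorm r (u - v) + (∑ i ∈ T, |v i| ^ r) ^ (1 / r) := by
  have hT : (∑ i ∈ T, |(u - v) i| ^ r) ^ (1 / r) ≤ lrNorm r (u - v) :=
    Real.rpow_le_rpow (by positivity)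
      (sum_le_sum_of_subset_of_nonneg (subset_univ T) fun i _ _ => by positivity) (by positivity)
  simpa using (Real.Lp_add_le T (u - v) v hr).trans (add_le_add_left hT _)

namespace IsStepVector

variable {d k : ℕ} {m : ℕ → ℕ} {r : ℝ} {u : Fin k → ℝ}

lemma sum_stepBlock_rpow_eq_one (hu : IsStepVector d m u) (hm : MonotoneOn m (Set.Iic d))
    (hr : 0 < r) (h : lrNorm r u = 1) : ∑ s ∈ Icc 1 d, ∑ i ∈ stepBlock k m s, |u i| ^ r = 1 := by
  rw [← sum_biUnion (pairwiseDisjoint_stepBlock hm), ← sum_rpow_eq_one_of_lrNorm_eq_one hr.ne' h]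
  refine sum_subset (subset_univ _) fun i _ hi => ?_
  have : u i = 0 := by
    by_contra hne
    obtain ⟨s, hs, his⟩ := hu.support i hne
    exact hi (mem_biUnion.mpr ⟨s, hs, his⟩)
  simp [this, hr.ne']

variable {a : ℕ} {c : ℕ → ℕ}

lemma sum_rpow_biUnion_le_inv (hu : IsStepVector d m u) (hm : MonotoneOn m (Set.Iic d))
    (hr : 0 < r) (h : lrNorm r u = 1) (hmk : m d ≤ k) (ha : 1 ≤ a)
    (hc : ∀ s ∈ Icc 1 d, m (s - 1) ≤ c s ∧ a * c s ≤ m s) :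
    ∑ i ∈ (Icc 1 d).biUnion (fun s => finIco k (m (s - 1)) (c s)), |u i| ^ r ≤ 1 / a := by
  have hsub : ∀ s ∈ Icc 1 d, finIco k (m (s - 1)) (c s) ⊆ stepBlock k m s := fun s hs =>
    finIco_subset_finIco le_rfl ((Nat.le_mul_of_pos_left _ ha).trans (hc s hs).2)
  rw [sum_biUnion ((pairwiseDisjoint_stepBlock hm).mono_on hsub)]
  calc _ ≤ ∑ s ∈ Icc 1 d, 1 / (a : ℝ) * ∑ i ∈ stepBlock k m s, |u i| ^ r :=
        sum_le_sum fun s hs => sum_le_mul_sum_of_card_le (hsub s hs)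
          (fun i hi j hj => by rw [hu.const s hs i hi j hj]) (fun i _ => by positivity) ?_
    _ = 1 / a := by rw [← mul_sum, hu.sum_stepBlock_rpow_eq_one hm hr h, mul_one]
  obtain ⟨hc₁, hc₂⟩ := hc s hs
  have hs' := mem_Icc.mp hs
  have hcm : c s ≤ m s := (Nat.le_mul_of_pos_left _ ha).trans hc₂
  have hmsk : m s ≤ k := (hm (by simp; omega) (by simp) hs'.2).trans hmk
  rw [stepBlock, card_finIco (hcm.trans hmsk), card_finIco hmsk,
    Nat.cast_sub hc₁, Nat.cast_sub (hc₁.trans hcm), one_div_mul_eq_div,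
    le_div_iff₀ (by exact_mod_cast ha)]
  have ha' : (1 : ℝ) ≤ a := by exact_mod_cast ha
  have hc₂' : (a : ℝ) * c s ≤ m s := by exact_mod_cast hc₂
  nlinarith [(m (s - 1)).cast_nonneg (α := ℝ)]

lemma one_sub_inv_le_sum_rpow_biUnion (hu : IsStepVector d m u) (hm : MonotoneOn m (Set.Iic d))
    (hr : 0 < r) (h : lrNorm r u = 1) (hmk : m d ≤ k) (ha : 1 ≤ a)
    (hc : ∀ s ∈ Icc 1 d, m (s - 1) ≤ c s ∧ a * c s ≤ m s) :
    1 - 1 / a ≤ ∑ i ∈ (Icc 1 d).biUnion (fun s => finIco k (c s) (m s)), |u i| ^ r := by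
  have hsub : ∀ s ∈ Icc 1 d, finIco k (c s) (m s) ⊆ stepBlock k m s := fun s hs =>
    finIco_subset_finIco (hc s hs).1 le_rfl
  rw [sum_biUnion ((pairwiseDisjoint_stepBlock hm).mono_on hsub)]
  calc 1 - 1 / (a : ℝ) = ∑ s ∈ Icc 1 d, (1 - 1 / (a : ℝ)) * ∑ i ∈ stepBlock k m s, |u i| ^ r := by
        rw [← mul_sum, hu.sum_stepBlock_rpow_eq_one hm hr h, mul_one]
    _ ≤ _ := sum_le_sum fun s hs => mul_sum_le_sum_of_le_card (hsub s hs)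
          (fun i hi j hj => by rw [hu.const s hs i hi j hj]) (fun i _ => by positivity) ?_
  obtain ⟨hc₁, hc₂⟩ := hc s hs
  have hs' := mem_Icc.mp hs
  have hcm : c s ≤ m s := (Nat.le_mul_of_pos_left _ ha).trans hc₂
  have hmsk : m s ≤ k := (hm (by simp; omega) (by simp) hs'.2).trans hmk
  rw [stepBlock, card_finIco hmsk, card_finIco hmsk,
    Nat.cast_sub hcm, Nat.cast_sub (hc₁.trans hcm)]
  have hc' : (c s : ℝ) ≤ m s / a := by
    rw [le_div_iff₀ (by exact_mod_cast ha), mul_comm]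
    exact_mod_cast hc₂
  have h1a : 0 ≤ 1 - 1 / (a : ℝ) :=
    sub_nonneg.mpr (div_le_one_of_le₀ (by exact_mod_cast ha) (by positivity))
  calc (1 - 1 / (a : ℝ)) * (m s - m (s - 1)) ≤ (1 - 1 / (a : ℝ)) * m s :=
        mul_le_mul_of_nonneg_left (by linarith [(m (s - 1)).cast_nonneg (α := ℝ)]) h1a
    _ = m s - m s / a := by ring
    _ ≤ m s - c s := by linarith

end IsStepVector

structure Interlaced (a d : ℕ) (m n : ℕ → ℕ) : Prop where
  m_zero : m 0 = 0
  n_zero : n 0 = 0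
  m_one_pos : 0 < m 1
  mul_n_le_m : ∀ s ∈ Icc 1 d, a * n (s - 1) ≤ m s
  mul_m_le_n : ∀ s ∈ Icc 1 d, a * m s ≤ n s

namespace Interlaced

variable {a d : ℕ} {m n : ℕ → ℕ}

lemma m_le_n (hI : Interlaced a d m n) (ha : 1 ≤ a) {s : ℕ} (hs : s ≤ d) : m s ≤ n s := by
  rcases Nat.eq_zero_or_pos s with rfl | hs0
  · rw [hI.m_zero, hI.n_zero]
  · exact (Nat.le_mul_of_pos_left _ ha).trans (hI.mul_m_le_n s (mem_Icc.mpr ⟨hs0, hs⟩))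

lemma n_le_m (hI : Interlaced a d m n) (ha : 1 ≤ a) {s : ℕ} (hs : s ∈ Icc 1 d) :
    n (s - 1) ≤ m s :=
  (Nat.le_mul_of_pos_left _ ha).trans (hI.mul_n_le_m s hs)

lemma monotoneOn_m (hI : Interlaced a d m n) (ha : 1 ≤ a) : MonotoneOn m (Set.Iic d) :=
  monotoneOn_of_le_add_one Set.ordConnected_Iic fun s _ _ hs => by
    have hs' : s + 1 ∈ Icc 1 d := mem_Icc.mpr ⟨by omega, hs⟩
    simpa using (hI.m_le_n ha (by simp at hs; omega)).trans (hI.n_le_m ha hs')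

lemma monotoneOn_n (hI : Interlaced a d m n) (ha : 1 ≤ a) : MonotoneOn n (Set.Iic d) :=
  monotoneOn_of_le_add_one Set.ordConnected_Iic fun s _ _ hs => by
    have hs' : s + 1 ∈ Icc 1 d := mem_Icc.mpr ⟨by omega, hs⟩
    simpa using (hI.n_le_m ha hs').trans (hI.m_le_n ha hs)

theorem rpow_sub_rpow_le_lrNorm_sub {k : ℕ} {r : ℝ} {u v : Fin k → ℝ} (hI : Interlaced a d m n) (ha : 1 ≤ a) (hr : 1 ≤ r) (hnk : n d ≤ k)
    (hu : IsStepVector d m u) (hv : IsStepVector d n v) (hu1 : lrNorm r u = 1)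
    (hv1 : lrNorm r v = 1) :
    (1 - 1 / (a : ℝ)) ^ (1 / r) - (1 / (a : ℝ)) ^ (1 / r) ≤ lrNorm r (u - v) := by
  have hr0 : 0 < r := by linarith
  set T := (Icc 1 d).biUnion fun s => finIco k (n (s - 1)) (m s)
  have hU : 1 - 1 / (a : ℝ) ≤ ∑ i ∈ T, |u i| ^ r :=
    hu.one_sub_inv_le_sum_rpow_biUnion (hI.monotoneOn_m ha) hr0 hu1
      ((hI.m_le_n ha le_rfl).trans hnk) ha
      fun s hs => ⟨hI.m_le_n ha (by simp at hs; omega), hI.mul_n_le_m s hs⟩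
  have hV : ∑ i ∈ T, |v i| ^ r ≤ 1 / a :=
    hv.sum_rpow_biUnion_le_inv (hI.monotoneOn_n ha) hr0 hv1 hnk ha
      fun s hs => ⟨hI.n_le_m ha hs, hI.mul_m_le_n s hs⟩
  have h1a : 0 ≤ 1 - 1 / (a : ℝ) :=
    sub_nonneg.mpr (div_le_one_of_le₀ (by exact_mod_cast ha) (by positivity))
  have := rpow_sum_le_lrNorm_sub_add hr T u v
  have := Real.rpow_le_rpow h1a hU (by positivity : 0 ≤ 1 / r)
  have := Real.rpow_le_rpow (sum_nonneg fun i _ => by positivity) hV (by positivity : 0 ≤ 1 / r)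
  linarith

end Interlaced

lemma one_sub_lt_rpow_sub_rpow {ε r a : ℝ} (hε : 0 < ε) (hr : 1 ≤ r) (ha : (8 / ε + 3) ^ r ≤ a) :
    1 - ε < (1 - 1 / a) ^ (1 / r) - (1 / a) ^ (1 / r) := by
  set t := 8 / ε + 3
  have hεt : 8 / ε < t := by simp [t]
  have ht : 3 ≤ t := by simp only [t, le_add_iff_nonneg_left]; positivity
  have htr : 0 < t ^ r := by positivity
  have hta : t ≤ a := (Real.self_le_rpow_of_one_le (by linarith) hr).trans ha
  have h1t : 1 / t < ε / 8 := by
    rw [div_lt_div_iff₀ (by linarith) (by norm_num), one_mul, ← div_lt_iff₀' hε]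
    exact hεt
  have ha0 : 0 < 1 / a := one_div_pos.mpr (by linarith)
  have h1a : 1 / a ≤ 1 / t := one_div_le_one_div_of_le (by linarith) hta
  have h1t3 : 1 / t ≤ 1 / 3 := one_div_le_one_div_of_le (by norm_num) ht
  have hleft : 1 - 1 / a ≤ (1 - 1 / a) ^ (1 / r) :=
    Real.self_le_rpow_of_le_one (by linarith) (by linarith) (div_le_one_of_le₀ hr (by linarith))
  have hright : (1 / a) ^ (1 / r) ≤ 1 / t := by
    rw [one_div r, Real.rpow_inv_le_iff_of_pos ha0.le (by positivity) (by linarith),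
      Real.div_rpow zero_le_one (by linarith), Real.one_rpow]
    exact one_div_le_one_div_of_le htr ha
  linarith

lemma mul_le_of_lt_of_pow {a x y : ℕ} (ha : 1 < a) (hx : ∃ i, x = a ^ i) (hy : ∃ j, y = a ^ j)
    (hxy : x < y) : a * x ≤ y := by
  obtain ⟨i, rfl⟩ := hx
  obtain ⟨j, rfl⟩ := hy
  rw [← pow_succ']
  exact Nat.pow_le_pow_right (by omega) ((Nat.pow_lt_pow_iff_right ha).mp hxy)

lemma interlaced_of_pow {a d : ℕ} {m n : ℕ → ℕ} (ha : 1 < a) (hd : 1 ≤ d) (hm0 : m 0 = 0)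
    (hn0 : n 0 = 0)
    (hmM : ∀ s, 1 ≤ s → s ≤ d → ∃ j : ℕ, m s = a ^ j)
    (hnM : ∀ s, 1 ≤ s → s ≤ d → ∃ j : ℕ, n s = a ^ j)
    (hint1 : ∀ s, 1 ≤ s → s ≤ d → m s < n s)
    (hint2 : ∀ s, 1 ≤ s → s < d → n s < m (s + 1)) : Interlaced a d m n where
  m_zero := hm0
  n_zero := hn0
  m_one_pos := by
    obtain ⟨j, hj⟩ := hmM 1 le_rfl hd
    exact hj ▸ Nat.pow_pos (by omega)
  mul_n_le_m s hs := by
    obtain ⟨hs1, hsd⟩ := mem_Icc.mp hs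
    rcases Nat.eq_or_lt_of_le hs1 with rfl | hs2
    · simp [hn0]
    · have := hint2 (s - 1) (by omega) (by omega)
      rw [Nat.sub_add_cancel hs1] at this
      exact mul_le_of_lt_of_pow ha (hnM (s - 1) (by omega) (by omega)) (hmM s hs1 hsd) this
  mul_m_le_n s hs := by
    obtain ⟨hs1, hsd⟩ := mem_Icc.mp hs
    exact mul_le_of_lt_of_pow ha (hmM s hs1 hsd) (hnM s hs1 hsd) (hint1 s hs1 hsd)

/-- Lemma 4.1 of the paper: separation of the values of a support and step
preserving map `F : S_{ℓ∞^k} → S_{ℓ_r^k}` at interlacing staircase vectors built over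
`M = {a^(j-1) : j ≥ 1}` with `a = ⌈(8/ε + 3)^r⌉`. -/
theorem stmt_8 (d : ℕ) (hd : 1 ≤ d) (ε : ℝ) (hε : 0 < ε) (r : ℝ) (hr : 1 ≤ r)
    (m n : ℕ → ℕ) (hm0 : m 0 = 0) (hn0 : n 0 = 0)
    (hmM : ∀ s, 1 ≤ s → s ≤ d → ∃ j : ℕ, m s = (⌈(8 / ε + 3 : ℝ) ^ r⌉₊) ^ j)
    (hnM : ∀ s, 1 ≤ s → s ≤ d → ∃ j : ℕ, n s = (⌈(8 / ε + 3 : ℝ) ^ r⌉₊) ^ j)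
    (hint1 : ∀ s, 1 ≤ s → s ≤ d → m s < n s)
    (hint2 : ∀ s, 1 ≤ s → s < d → n s < m (s + 1))
    (k : ℕ) (hk : n d < k)
    (F : (Fin k → ℝ) → (Fin k → ℝ))
    (hFmaps : ∀ x, supNorm x = 1 → lrNorm r (F x) = 1)
    (hsupp : ∀ x, supNorm x = 1 → ∀ i, (F x i ≠ 0 ↔ x i ≠ 0))
    (hstep : ∀ x, supNorm x = 1 → ∀ i j, x i = x j → F x i = F x j) :
    1 - ε < lrNorm r (F (zVec d k m) - F (zVec d k n)) := by
  set a := ⌈(8 / ε + 3 : ℝ) ^ r⌉₊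
  have ha : 1 < a := Nat.lt_ceil.mpr <| by
    exact_mod_cast Real.one_lt_rpow (by linarith [(by positivity : 0 < 8 / ε)]) (by linarith)
  have hI : Interlaced a d m n := interlaced_of_pow ha hd hm0 hn0 hmM hnM hint1 hint2
  have hm := hI.monotoneOn_m ha.le
  have hn := hI.monotoneOn_n ha.le
  have hzm : supNorm (zVec d k m) = 1 :=
    supNorm_zVec hd hm hm0 hI.m_one_pos (by omega)
  have hzn : supNorm (zVec d k n) = 1 :=
    supNorm_zVec hd hn hn0 (hI.m_one_pos.trans_le (hI.m_le_n ha.le hd)) (by omega)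
  have hu := (isStepVector_zVec hm).of_preserving (hstep _ hzm) fun i => (hsupp _ hzm i).1
  have hv := (isStepVector_zVec hn).of_preserving (hstep _ hzn) fun i => (hsupp _ hzn i).1
  calc 1 - ε < (1 - 1 / (a : ℝ)) ^ (1 / r) - (1 / (a : ℝ)) ^ (1 / r) :=
        one_sub_lt_rpow_sub_rpow hε hr (Nat.le_ceil _)
    _ ≤ _ := hI.rpow_sub_rpow_le_lrNorm_sub ha.le hr hk.le hu hv (hFmaps _ hzm) (hFmaps _ hzn)
end

section
/- Let k ∈ ℕ and let F : S_{ℓ∞^k} → S⁺_{ℓ1^k} be any map. Then the map G = (1/k!)·∑_{π ∈ Per_k} P_{π^{-1}} ∘ F ∘ P_π, where the sum is over all permutations π of {1,…,k}, is a well-defined map from S_{ℓ∞^k} into S⁺_{ℓ1^k}, is equivariant with respect to basis permutations, and satisfies ω_G(t) ≤ ω_F(t) for all t ≥ 0. Furthermore, if F is support preserving then so is G. -/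
/-- The modulus of uniform continuity of `F : S_{ℓ∞^k} → ℓ1^k` at `t`. -/
noncomputable def modCont {k : ℕ} (F : (Fin k → ℝ) → (Fin k → ℝ)) (t : ℝ) : ℝ :=
  sSup {u : ℝ | ∃ x y : Fin k → ℝ, supNorm x = 1 ∧ supNorm y = 1 ∧
    supNorm (x - y) ≤ t ∧ u = l1Norm (F x - F y)}

/-!
Averaging `F` over the conjugation action of the symmetric group gives an equivariant map, and
every property in question survives the averaging: the sphere `S_{ℓ∞^k}` is permutation
invariant, and the `ℓ1` norm is permutation invariant and convex (additive on nonnegative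
vectors), so each conjugate `P_{π⁻¹} ∘ F ∘ P_π` maps into `S⁺_{ℓ1^k}` with modulus `ω_F`, and
their average does as well.
-/

open Finset
open scoped BigOperators

/-- With `P_π x = x ∘ π`, this is `(1/k!) ∑_π P_{π⁻¹} (F (P_π x))`. -/
noncomputable def permAverage {k : ℕ} (F : (Fin k → ℝ) → Fin k → ℝ) (x : Fin k → ℝ) :
    Fin k → ℝ :=
  fun j => 𝔼 π : Equiv.Perm (Fin k), F (x ∘ π) (π.symm j)

section

variable {k : ℕ}

lemma supNorm_comp_perm (x : Fin k → ℝ) (π : Equiv.Perm (Fin k)) :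
    supNorm (x ∘ π) = supNorm x :=
  π.iSup_comp (g := fun i => |x i|)

lemma l1Norm_comp_perm (x : Fin k → ℝ) (π : Equiv.Perm (Fin k)) :
    l1Norm (x ∘ π) = l1Norm x :=
  Equiv.sum_comp π (fun i => |x i|)

lemma l1Norm_sub_le (x y : Fin k → ℝ) : l1Norm (x - y) ≤ l1Norm x + l1Norm y := by
  rw [l1Norm, l1Norm, l1Norm, ← sum_add_distrib]
  exact sum_le_sum fun i _ => abs_sub _ _

lemma l1Norm_expect_le {ι : Type*} [Fintype ι] (v : ι → Fin k → ℝ) :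
    l1Norm (fun j => 𝔼 i, v i j) ≤ 𝔼 i, l1Norm (v i) := by
  simp only [l1Norm]
  rw [expect_sum_comm]
  exact sum_le_sum fun j _ => abs_expect_le _ _

lemma l1Norm_expect_of_nonneg {ι : Type*} [Fintype ι] {v : ι → Fin k → ℝ}
    (hv : ∀ i j, 0 ≤ v i j) :
    l1Norm (fun j => 𝔼 i, v i j) = 𝔼 i, l1Norm (v i) := by
  simp only [l1Norm, abs_of_nonneg (hv _ _), abs_of_nonneg (expect_nonneg fun i _ => hv i _)]
  exact expect_sum_comm _ _ _ |>.symm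

lemma modCont_nonneg (F : (Fin k → ℝ) → Fin k → ℝ) (t : ℝ) : 0 ≤ modCont F t :=
  Real.sSup_nonneg fun _ ⟨_, _, _, _, _, hu⟩ => hu ▸ sum_nonneg fun _ _ => abs_nonneg _

lemma l1Norm_sub_le_modCont {F : (Fin k → ℝ) → Fin k → ℝ} {C : ℝ}
    (hF : ∀ x, supNorm x = 1 → l1Norm (F x) ≤ C) {x y : Fin k → ℝ} {t : ℝ}
    (hx : supNorm x = 1) (hy : supNorm y = 1) (hxy : supNorm (x - y) ≤ t) :
    l1Norm (F x - F y) ≤ modCont F t := by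
  refine le_csSup ⟨C + C, ?_⟩ ⟨x, y, hx, hy, hxy, rfl⟩
  rintro _ ⟨x', y', hx', hy', -, rfl⟩
  exact (l1Norm_sub_le _ _).trans (add_le_add (hF x' hx') (hF y' hy'))

lemma modCont_le {F : (Fin k → ℝ) → Fin k → ℝ} {t c : ℝ} (hc : 0 ≤ c)
    (h : ∀ x y, supNorm x = 1 → supNorm y = 1 → supNorm (x - y) ≤ t →
      l1Norm (F x - F y) ≤ c) :
    modCont F t ≤ c :=
  Real.sSup_le (by rintro _ ⟨x, y, hx, hy, hxy, rfl⟩; exact h x y hx hy hxy) hc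

end

namespace permAverage

variable {k : ℕ} {F : (Fin k → ℝ) → Fin k → ℝ} {x : Fin k → ℝ}

lemma comp_perm (F : (Fin k → ℝ) → Fin k → ℝ) (x : Fin k → ℝ) (σ : Equiv.Perm (Fin k)) :
    permAverage F (x ∘ σ) = permAverage F x ∘ σ := by
  funext j
  exact Fintype.expect_equiv (Equiv.mulLeft σ) _ _ fun π => by
    simp [Function.comp_def, Equiv.Perm.mul_def]

lemma nonneg (hF : ∀ x, supNorm x = 1 → ∀ i, 0 ≤ F x i) (hx : supNorm x = 1)
    (j : Fin k) : 0 ≤ permAverage F x j :=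
  expect_nonneg fun π _ => hF _ ((supNorm_comp_perm x π).trans hx) _

lemma l1Norm_eq_one (hF : ∀ x, supNorm x = 1 → l1Norm (F x) = 1 ∧ ∀ i, 0 ≤ F x i)
    (hx : supNorm x = 1) : l1Norm (permAverage F x) = 1 := by
  have hxπ (π : Equiv.Perm (Fin k)) : supNorm (x ∘ π) = 1 := (supNorm_comp_perm x π).trans hx
  calc l1Norm (permAverage F x)
      = 𝔼 π : Equiv.Perm (Fin k), l1Norm (F (x ∘ π) ∘ π.symm) :=
        l1Norm_expect_of_nonneg fun π _ => (hF _ (hxπ π)).2 _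
    _ = 1 := by simp only [l1Norm_comp_perm, (hF _ (hxπ _)).1, Fintype.expect_const]

lemma l1Norm_sub_le_expect (F : (Fin k → ℝ) → Fin k → ℝ) (x y : Fin k → ℝ) :
    l1Norm (permAverage F x - permAverage F y) ≤
      𝔼 π : Equiv.Perm (Fin k), l1Norm (F (x ∘ π) - F (y ∘ π)) := by
  calc l1Norm (permAverage F x - permAverage F y)
      = l1Norm (fun j => 𝔼 π : Equiv.Perm (Fin k), ((F (x ∘ π) - F (y ∘ π)) ∘ π.symm) j) := by
        simp only [Function.comp_apply, Pi.sub_apply, expect_sub_distrib]; rfl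
    _ ≤ _ := l1Norm_expect_le _
    _ = _ := by simp only [l1Norm_comp_perm]

lemma modCont_le {C : ℝ} (hF : ∀ x, supNorm x = 1 → l1Norm (F x) ≤ C) (t : ℝ) :
    modCont (permAverage F) t ≤ modCont F t := by
  refine _root_.modCont_le (modCont_nonneg F t) fun x y hx hy hxy => ?_
  refine (l1Norm_sub_le_expect F x y).trans (expect_le univ_nonempty fun π _ => ?_)
  refine l1Norm_sub_le_modCont hF ((supNorm_comp_perm x π).trans hx)
    ((supNorm_comp_perm y π).trans hy) ?_
  rwa [← Pi.sub_comp, supNorm_comp_perm]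

lemma ne_zero_iff (hF : ∀ x, supNorm x = 1 → ∀ i, 0 ≤ F x i)
    (hsupp : ∀ x, supNorm x = 1 → ∀ i, (F x i ≠ 0 ↔ x i ≠ 0)) (hx : supNorm x = 1)
    (i : Fin k) : permAverage F x i ≠ 0 ↔ x i ≠ 0 := by
  have hterm (π : Equiv.Perm (Fin k)) : F (x ∘ π) (π.symm i) ≠ 0 ↔ x i ≠ 0 := by
    rw [hsupp _ ((supNorm_comp_perm x π).trans hx)]
    simp
  rw [permAverage, Ne, expect_eq_zero_iff_of_nonneg fun π _ =>
    hF _ ((supNorm_comp_perm x π).trans hx) _]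
  simp only [mem_univ, forall_const, not_forall]
  exact ⟨fun ⟨π, h⟩ => (hterm π).1 h, fun h => ⟨1, (hterm 1).2 h⟩⟩

end permAverage

/-- Lemma 4.3 of the paper: the average
`G = (1/k!)·∑_{π} P_{π⁻¹} ∘ F ∘ P_π` of a map `F : S_{ℓ∞^k} → S⁺_{ℓ1^k}` maps into
`S⁺_{ℓ1^k}`, is equivariant with respect to basis permutations, satisfies `ω_G ≤ ω_F`, and
is support preserving whenever `F` is. -/
theorem stmt_10 (k : ℕ)
    (F : (Fin k → ℝ) → (Fin k → ℝ))
    (hFmaps : ∀ x, supNorm x = 1 → l1Norm (F x) = 1 ∧ ∀ i, 0 ≤ F x i)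
    (G : (Fin k → ℝ) → (Fin k → ℝ))
    (hG : ∀ x j, G x j = (k.factorial : ℝ)⁻¹ *
      ∑ π : Equiv.Perm (Fin k), F (x ∘ π) (π.symm j)) :
    (∀ x, supNorm x = 1 → l1Norm (G x) = 1 ∧ ∀ i, 0 ≤ G x i) ∧
    (∀ x, supNorm x = 1 → ∀ π : Equiv.Perm (Fin k), G (x ∘ π) = (G x) ∘ π) ∧
    (∀ t : ℝ, 0 ≤ t → modCont G t ≤ modCont F t) ∧
    ((∀ x, supNorm x = 1 → ∀ i, (F x i ≠ 0 ↔ x i ≠ 0)) →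
      ∀ x, supNorm x = 1 → ∀ i, (G x i ≠ 0 ↔ x i ≠ 0)) := by
  have hGF : G = permAverage F := by
    funext x j
    rw [hG, permAverage, Fintype.expect_eq_sum_div_card, Fintype.card_perm, Fintype.card_fin,
      inv_mul_eq_div]
  have hFnonneg : ∀ x, supNorm x = 1 → ∀ i, 0 ≤ F x i := fun x hx => (hFmaps x hx).2
  subst hGF
  exact ⟨fun x hx => ⟨permAverage.l1Norm_eq_one hFmaps hx, permAverage.nonneg hFnonneg hx⟩,
    fun x _ => permAverage.comp_perm F x,
    fun t _ => permAverage.modCont_le (fun x hx => (hFmaps x hx).1.le) t,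
    fun hsupp x hx => permAverage.ne_zero_iff hFnonneg hsupp hx⟩
end
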